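/- arXiv:0910.5343 — 6 statements merged into one kernel-verified Lean document; each statement's English description precedes it below -/
import Mathlib

section
/- Let x, y ∈ C_ℝ \ {0} be linearly independent. Then δ_C(x + i·y, x) ≤ δ_C(x, y). -/
open Complex

/-- Logarithm on `[0,∞]` with values in `[-∞,∞]`. -/
noncomputable def elog (x : ENNReal) : EReal :=
  if x = 0 then ⊥ else if x = ⊤ then ⊤ else (Real.log x.toReal : EReal)

/-- The complex cone `ℂ*·(C_ℝ + i·C_ℝ) \ {0}` generated by a real cone `Cr`. -/
def complexCone {V : Type*} [AddCommGroup V] [Module ℂ V] (Cr : Set V) : Set V :=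
  {x | x ≠ 0 ∧ ∃ c : ℂ, c ≠ 0 ∧ ∃ u ∈ Cr, ∃ v ∈ Cr, x = c • (u + Complex.I • v)}

/-- `E_C(x,y) = {z ∈ ℂ : z•x − y ∉ C}`. -/
def ECset {V : Type*} [AddCommGroup V] [Module ℂ V] (Cc : Set V) (x y : V) : Set ℂ :=
  {z | z • x - y ∉ Cc}

/-- The projective metric `δ_C(x,y) = log(b/a)` of a complex cone. -/
noncomputable def deltaC {V : Type*} [AddCommGroup V] [Module ℂ V]
    (Cc : Set V) (x y : V) : EReal :=
  elog ((⨆ z ∈ ECset Cc x y, (‖z‖₊ : ENNReal)) / (⨅ z ∈ ECset Cc x y, (‖z‖₊ : ENNReal)))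

/-- The Hilbert metric `h_{C_ℝ}(u,v) = log(β/α)` of a real cone. -/
noncomputable def hilbertMetric {V : Type*} [AddCommGroup V] [Module ℝ V]
    (Cr : Set V) (u v : V) : EReal :=
  elog ((sInf {t : ENNReal | ∃ s : ℝ, 0 < s ∧ t = ENNReal.ofReal s ∧ s • u - v ∈ Cr}) /
        (sSup {t : ENNReal | ∃ s : ℝ, 0 ≤ s ∧ t = ENNReal.ofReal s ∧ v - s • u ∈ Cr}))

/-- The dual cone `C_ℝ'`: complex-linear extensions of the continuous real-linear
functionals on `V_ℝ` that are nonnegative on `C_ℝ`. -/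
noncomputable def dualCone {V : Type*} [NormedAddCommGroup V] [NormedSpace ℂ V]
    (Vr : Submodule ℝ V) (Cr : Set V) : Set (V →L[ℂ] ℂ) :=
  {l | (∀ u ∈ Vr, (l u).im = 0) ∧ ∀ u ∈ Cr, 0 ≤ (l u).re}

/-!
Let `α` be the largest `t ≥ 0` with `y - t • x ∈ C_ℝ` and `β` the smallest `t` with
`t • x - y ∈ C_ℝ` (`β = ∞` if there is none). A real vector of `C_ℂ` is `±` a vector of `C_ℝ`, so
every real `t ∈ (α, β)` lies in `E_C(x, y)`, whence `δ_C(x, y) ≥ log (β / α)`.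

Conversely, `(β - α) (z (x + i y) - x) = ζ₁ (β x - y) + ζ₂ (y - α x)` with `ζ₁ = (1 + iα) z - 1`
and `ζ₂ = (1 + iβ) z - 1`. If `Re (ζ₁ conj ζ₂) ≥ 0`, then `ζ₁, ζ₂` lie in a common rotated
quadrant and the vector is in `C_ℂ`. By the parallelogram identity this leaves, for
`z ∈ E_C(x + i y, x)`, only the disc `|(1 + i m) z - 1| < ρ |z|` with `m = (α + β) / 2`,
`ρ = (β - α) / 2`, on which `1 / (d + ρ) < |z| < 1 / (d - ρ)` for `d = |1 + i m| ≥ m`. Hence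
`δ_C(x + i y, x) ≤ log ((d + ρ) / (d - ρ)) ≤ log ((m + ρ) / (m - ρ)) = log (β / α)`.
-/

open scoped ENNReal ComplexConjugate

lemma elog_mono : Monotone elog := by
  intro a b hab
  rcases eq_or_ne a 0 with rfl | ha0
  · simp [elog]
  rcases eq_or_ne b ⊤ with rfl | hbt
  · simp only [elog, if_neg (by simp : (⊤ : ℝ≥0∞) ≠ 0)]
    split_ifs <;> simp
  have hb0 : b ≠ 0 := (pos_of_ne_zero ha0 |>.trans_le hab).ne'
  have hat : a ≠ ⊤ := ne_top_of_le_ne_top hbt hab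
  simp only [elog, if_neg ha0, if_neg hb0, if_neg hat, if_neg hbt]
  exact_mod_cast Real.log_le_log (ENNReal.toReal_pos ha0 hat) (ENNReal.toReal_mono hbt hab)

lemma elog_top : elog ⊤ = ⊤ := by simp [elog]

lemma coe_nnnorm_eq_ofReal_norm {E : Type*} [SeminormedAddCommGroup E] (z : E) :
    (‖z‖₊ : ℝ≥0∞) = ENNReal.ofReal ‖z‖ :=
  (ofReal_norm z).symm

section ProjectiveMetric

variable {V : Type*} [AddCommGroup V] [Module ℂ V] {Cc : Set V} {x y : V}

lemma deltaC_le_elog_of_forall_mem_ECset {L U : ℝ} (hL : 0 < L)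
    (h : ∀ z ∈ ECset Cc x y, L ≤ ‖z‖ ∧ ‖z‖ ≤ U) :
    deltaC Cc x y ≤ elog (ENNReal.ofReal (U / L)) := by
  have hsup : ⨆ z ∈ ECset Cc x y, (‖z‖₊ : ℝ≥0∞) ≤ ENNReal.ofReal U :=
    iSup₂_le fun z hz =>
      (coe_nnnorm_eq_ofReal_norm z).trans_le (ENNReal.ofReal_le_ofReal (h z hz).2)
  have hinf : ENNReal.ofReal L ≤ ⨅ z ∈ ECset Cc x y, (‖z‖₊ : ℝ≥0∞) :=
    le_iInf₂ fun z hz =>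
      (ENNReal.ofReal_le_ofReal (h z hz).1).trans_eq (coe_nnnorm_eq_ofReal_norm z).symm
  rw [ENNReal.ofReal_div_of_pos hL]
  exact elog_mono (ENNReal.div_le_div hsup hinf)

lemma elog_div_le_deltaC {a b : ℝ≥0∞} (hab : a < b)
    (h : ∀ t : ℝ, a < ENNReal.ofReal t → ENNReal.ofReal t < b → (t : ℂ) ∈ ECset Cc x y) :
    elog (b / a) ≤ deltaC Cc x y := by
  have hmem : ∀ c, a < c → c < b → ∃ z ∈ ECset Cc x y, (‖z‖₊ : ℝ≥0∞) = c := by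
    intro c hac hcb
    have hc : c ≠ ⊤ := hcb.ne_top
    refine ⟨(c.toReal : ℂ), h _ (by rwa [ENNReal.ofReal_toReal hc])
      (by rwa [ENNReal.ofReal_toReal hc]), ?_⟩
    rw [coe_nnnorm_eq_ofReal_norm, Complex.norm_real, Real.norm_of_nonneg ENNReal.toReal_nonneg,
      ENNReal.ofReal_toReal hc]
  refine elog_mono (ENNReal.div_le_div ?_ ?_)
  · refine le_of_forall_lt_imp_le_of_dense fun c hc => ?_
    obtain ⟨c', hc', hc'b⟩ := exists_between (max_lt hab hc)
    obtain ⟨z, hz, hzc'⟩ := hmem c' ((le_max_left _ _).trans_lt hc') hc'b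
    rw [← hzc'] at hc'
    exact ((le_max_right _ _).trans hc'.le).trans
      (le_iSup₂ (f := fun z (_ : z ∈ ECset Cc x y) => (‖z‖₊ : ℝ≥0∞)) z hz)
  · refine le_of_forall_gt_imp_ge_of_dense fun c hc => ?_
    obtain ⟨c', hac', hc'⟩ := exists_between (lt_min hab hc)
    obtain ⟨z, hz, hzc'⟩ := hmem c' hac' (hc'.trans_le (min_le_left _ _))
    rw [← hzc'] at hc'
    exact (iInf₂_le (f := fun z (_ : z ∈ ECset Cc x y) => (‖z‖₊ : ℝ≥0∞)) z hz).trans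
      (hc'.le.trans (min_le_right _ _))

end ProjectiveMetric

section RealCone

variable {E : Type*} [AddCommGroup E] [Module ℝ E] {C : Set E}

lemma mem_or_neg_mem_of_smul_mem (hsmul : ∀ t : ℝ, 0 ≤ t → ∀ u ∈ C, t • u ∈ C)
    {s : ℝ} {r : E} (hs : s ≠ 0) (h : s • r ∈ C) : r ∈ C ∨ -r ∈ C := by
  rcases hs.lt_or_gt with hs | hs
  · right
    convert hsmul (-s)⁻¹ (inv_nonneg.2 (neg_nonneg.2 hs.le)) _ h using 1
    rw [smul_smul, inv_neg, neg_mul, inv_mul_cancel₀ hs.ne, neg_one_smul]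
  · left
    convert hsmul s⁻¹ (by positivity) _ h using 1
    rw [smul_smul, inv_mul_cancel₀ hs.ne', one_smul]

lemma lt_of_sub_smul_mem_of_smul_sub_mem (hadd : ∀ u ∈ C, ∀ v ∈ C, u + v ∈ C)
    (hsmul : ∀ t : ℝ, 0 ≤ t → ∀ u ∈ C, t • u ∈ C) (hproper : ∀ u ∈ C, -u ∈ C → u = 0)
    {x y : E} (hind : LinearIndependent ℝ ![x, y]) (hx : x ∈ C) {s t : ℝ}
    (hs : y - s • x ∈ C) (ht : t • x - y ∈ C) : s < t := by
  by_contra! hts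
  have hneg : -(t • x - y) ∈ C := by
    convert hadd _ hs _ (hsmul (s - t) (sub_nonneg.2 hts) x hx) using 1
    module
  have h0 : t • x + (-1 : ℝ) • y = 0 := by
    rw [neg_one_smul, ← sub_eq_add_neg]
    exact hproper _ ht hneg
  exact one_ne_zero (neg_eq_zero.1 (LinearIndependent.pair_iff.1 hind _ _ h0).2)

lemma bddAbove_setOf_sub_smul_mem [TopologicalSpace E] [IsTopologicalAddGroup E]
    [ContinuousSMul ℝ E] (hclosed : IsClosed C) (hadd : ∀ u ∈ C, ∀ v ∈ C, u + v ∈ C)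
    (hsmul : ∀ t : ℝ, 0 ≤ t → ∀ u ∈ C, t • u ∈ C) (hproper : ∀ u ∈ C, -u ∈ C → u = 0)
    {x : E} (hx : x ∈ C) (hx0 : x ≠ 0) (v : E) : BddAbove {t : ℝ | v - t • x ∈ C} := by
  by_contra hunb
  -- the set is downward closed, so unboundedness makes it all of `ℝ`
  have hall : ∀ t : ℝ, v - t • x ∈ C := by
    intro t
    obtain ⟨s, hs, hts⟩ := not_bddAbove_iff.1 hunb t
    convert hadd _ hs _ (hsmul (s - t) (sub_nonneg.2 hts.le) x hx) using 1
    module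
  have hmem : ∀ᶠ t : ℝ in Filter.atTop, t⁻¹ • v - x ∈ C := by
    filter_upwards [Filter.eventually_gt_atTop 0] with t ht
    convert hsmul t⁻¹ (by positivity) _ (hall t) using 1
    rw [smul_sub, smul_smul, inv_mul_cancel₀ ht.ne', one_smul]
  have hlim : Filter.Tendsto (fun t : ℝ => t⁻¹ • v - x) Filter.atTop (nhds (-x)) := by
    simpa using ((tendsto_inv_atTop_zero (𝕜 := ℝ)).smul_const v).sub_const x
  exact hx0 (hproper x hx (hclosed.mem_of_tendsto hlim hmem))

lemma exists_isGreatest_sub_smul_mem [TopologicalSpace E] [IsTopologicalAddGroup E]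
    [ContinuousSMul ℝ E] (hclosed : IsClosed C) (hadd : ∀ u ∈ C, ∀ v ∈ C, u + v ∈ C)
    (hsmul : ∀ t : ℝ, 0 ≤ t → ∀ u ∈ C, t • u ∈ C) (hproper : ∀ u ∈ C, -u ∈ C → u = 0)
    {x y : E} (hx : x ∈ C) (hx0 : x ≠ 0) (hy : y ∈ C) :
    ∃ α, IsGreatest {t : ℝ | 0 ≤ t ∧ y - t • x ∈ C} α :=
  ⟨_, IsClosed.isGreatest_csSup
    ((isClosed_le continuous_const continuous_id).inter (hclosed.preimage (by fun_prop)))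
    ⟨0, le_rfl, by simpa using hy⟩
    ((bddAbove_setOf_sub_smul_mem hclosed hadd hsmul hproper hx hx0 y).mono fun _ ht => ht.2)⟩

end RealCone

lemma one_lt_mul_norm_and_mul_norm_lt_one {𝕜 : Type*} [NormedDivisionRing 𝕜] {w z : 𝕜}
    {ρ : ℝ} (h : ‖w * z - 1‖ < ρ * ‖z‖) : 1 < (‖w‖ + ρ) * ‖z‖ ∧ (‖w‖ - ρ) * ‖z‖ < 1 := by
  have h₁ := norm_sub_norm_le (w * z) 1
  have h₂ := norm_sub_norm_le 1 (w * z)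
  rw [norm_sub_rev 1] at h₂
  rw [norm_mul, norm_one] at h₁ h₂
  constructor <;> linarith

lemma four_mul_re_mul_conj (a b : ℂ) : 4 * (a * conj b).re = ‖a + b‖ ^ 2 - ‖a - b‖ ^ 2 := by
  rw [← Complex.normSq_eq_norm_sq, ← Complex.normSq_eq_norm_sq, Complex.normSq_add,
    Complex.normSq_sub]
  ring

lemma add_div_sub_le_add_div_sub {ρ m d : ℝ} (hρ : 0 ≤ ρ) (hρm : ρ < m) (hmd : m ≤ d) :
    (d + ρ) / (d - ρ) ≤ (m + ρ) / (m - ρ) := by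
  rw [div_le_div_iff₀ (by linarith) (by linarith)]
  nlinarith

section ComplexCone

variable {V : Type*} [AddCommGroup V] [Module ℂ V] {Cr : Set V}

lemma smul_eq_re_smul_add_I_smul (c : ℂ) (v : V) : c • v = c.re • v + I • (c.im • v) := by
  conv_lhs => rw [← Complex.re_add_im c]
  rw [add_smul, mul_comm, mul_smul, Complex.coe_smul, Complex.coe_smul]

lemma smul_mem_complexCone {c : ℂ} (hc : c ≠ 0) {v : V}
    (hv : v ∈ complexCone Cr) : c • v ∈ complexCone Cr := by
  obtain ⟨hv0, c', hc', u, hu, w, hw, rfl⟩ := hv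
  exact ⟨smul_ne_zero hc hv0, c * c', mul_ne_zero hc hc', u, hu, w, hw, smul_smul _ _ _⟩

lemma smul_add_smul_mem_complexCone (hadd : ∀ u ∈ Cr, ∀ v ∈ Cr, u + v ∈ Cr)
    (hsmul : ∀ t : ℝ, 0 ≤ t → ∀ u ∈ Cr, t • u ∈ Cr) {f₁ f₂ : V} (hf₁ : f₁ ∈ Cr)
    (hf₂ : f₂ ∈ Cr) {ζ₁ ζ₂ : ℂ} (hζ : 0 ≤ (ζ₁ * conj ζ₂).re) (hne : ζ₁ • f₁ + ζ₂ • f₂ ≠ 0) :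
    ζ₁ • f₁ + ζ₂ • f₂ ∈ complexCone Cr := by
  wlog him : 0 ≤ (ζ₂ * conj ζ₁).im generalizing ζ₁ ζ₂ f₁ f₂
  · rw [add_comm] at hne ⊢
    have hconj : ζ₁ * conj ζ₂ = conj (ζ₂ * conj ζ₁) := by simp [mul_comm]
    refine this hf₂ hf₁ ?_ hne ?_
    · rwa [hconj, Complex.conj_re] at hζ
    · rw [hconj, Complex.conj_im]
      linarith
  refine ⟨hne, ?_⟩
  rcases eq_or_ne ζ₁ 0 with rfl | hζ₁
  · have hζ₂ : ζ₂ ≠ 0 := by rintro rfl; simp at hne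
    exact ⟨ζ₂, hζ₂, f₂, hf₂, 0, by simpa using hsmul 0 le_rfl _ hf₁, by simp⟩
  -- `ζ₁ • f₁ + ζ₂ • f₂ = ζ₁ • (f₁ + (ζ₂ / ζ₁) • f₂)` with `ζ₂ / ζ₁` in the closed first quadrant
  have hdiv : ζ₂ / ζ₁ = ζ₂ * conj ζ₁ * ((normSq ζ₁)⁻¹ : ℝ) := by
    rw [div_eq_mul_inv, Complex.inv_def, mul_assoc]
  have hnorm : 0 ≤ (normSq ζ₁)⁻¹ := inv_nonneg.2 (normSq_nonneg ζ₁)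
  have hdiv_re : 0 ≤ (ζ₂ / ζ₁).re := by
    rw [hdiv, Complex.re_mul_ofReal]
    refine mul_nonneg ?_ hnorm
    rwa [← Complex.conj_re, map_mul, Complex.conj_conj, mul_comm]
  have hdiv_im : 0 ≤ (ζ₂ / ζ₁).im := by
    rw [hdiv, Complex.im_mul_ofReal]
    exact mul_nonneg him hnorm
  refine ⟨ζ₁, hζ₁, f₁ + (ζ₂ / ζ₁).re • f₂, hadd _ hf₁ _ (hsmul _ hdiv_re _ hf₂),
    (ζ₂ / ζ₁).im • f₂, hsmul _ hdiv_im _ hf₂, ?_⟩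
  rw [add_assoc, ← smul_eq_re_smul_add_I_smul, smul_add, smul_smul, mul_div_cancel₀ _ hζ₁]

lemma smul_add_I_smul_sub_ne_zero {x y : V} (hxy : LinearIndependent ℂ ![x, y]) (z : ℂ) :
    z • (x + I • y) - x ≠ 0 := by
  intro h
  have h' : (z - 1) • x + (I * z) • y = 0 := by rw [← h]; module
  obtain ⟨hz₁, hz₂⟩ := LinearIndependent.pair_iff.1 hxy _ _ h'
  simp_all [sub_eq_zero]

lemma ECset_add_I_smul_subset (hadd : ∀ u ∈ Cr, ∀ v ∈ Cr, u + v ∈ Cr)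
    (hsmul : ∀ t : ℝ, 0 ≤ t → ∀ u ∈ Cr, t • u ∈ Cr) {x y : V} {α β : ℝ} (hαβ : α < β)
    (hβ : β • x - y ∈ Cr) (hα : y - α • x ∈ Cr) (hxy : LinearIndependent ℂ ![x, y]) :
    ECset (complexCone Cr) (x + I • y) x ⊆
      {z | ‖(1 + ((α + β) / 2 : ℝ) * I) * z - 1‖ < (β - α) / 2 * ‖z‖} := by
  intro z hz
  by_contra! hle
  rw [Set.mem_ofPred_eq, not_lt] at hle
  apply hz
  set ζ₁ : ℂ := (1 + α * I) * z - 1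
  set ζ₂ : ℂ := (1 + β * I) * z - 1
  have hdecomp : ((β - α : ℝ) : ℂ) • (z • (x + I • y) - x) =
      ζ₁ • (β • x - y) + ζ₂ • (y - α • x) := by
    simp only [ζ₁, ζ₂, ← Complex.coe_smul]
    module
  have hζ : 0 ≤ (ζ₁ * conj ζ₂).re := by
    have hsum : ζ₁ + ζ₂ = 2 * ((1 + ((α + β) / 2 : ℝ) * I) * z - 1) := by
      simp only [ζ₁, ζ₂]; push_cast; ring
    have hdiff : ζ₁ - ζ₂ = ((α - β : ℝ) : ℂ) * I * z := by
      simp only [ζ₁, ζ₂]; push_cast; ring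
    have h4 := four_mul_re_mul_conj ζ₁ ζ₂
    rw [hsum, hdiff, norm_mul, norm_mul, norm_mul, Complex.norm_I, Complex.norm_real,
      Real.norm_of_nonpos (by linarith), Complex.norm_ofNat] at h4
    nlinarith [norm_nonneg z, mul_nonneg (by linarith : (0 : ℝ) ≤ (β - α) / 2) (norm_nonneg z)]
  have hβα : ((β - α : ℝ) : ℂ) ≠ 0 := Complex.ofReal_ne_zero.2 (sub_ne_zero.2 hαβ.ne')
  have hmem := smul_mem_complexCone (inv_ne_zero hβα)
    (smul_add_smul_mem_complexCone hadd hsmul hβ hα hζ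
      (hdecomp ▸ smul_ne_zero hβα (smul_add_I_smul_sub_ne_zero hxy z)))
  rwa [← hdecomp, smul_smul, inv_mul_cancel₀ hβα, one_smul] at hmem

lemma deltaC_add_I_smul_le_elog_div (hadd : ∀ u ∈ Cr, ∀ v ∈ Cr, u + v ∈ Cr)
    (hsmul : ∀ t : ℝ, 0 ≤ t → ∀ u ∈ Cr, t • u ∈ Cr) {x y : V} {α β : ℝ} (hα0 : 0 < α)
    (hαβ : α < β) (hβ : β • x - y ∈ Cr) (hα : y - α • x ∈ Cr)
    (hxy : LinearIndependent ℂ ![x, y]) :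
    deltaC (complexCone Cr) (x + I • y) x ≤ elog (ENNReal.ofReal (β / α)) := by
  have hsub := ECset_add_I_smul_subset hadd hsmul hαβ hβ hα hxy
  set w : ℂ := 1 + ((α + β) / 2 : ℝ) * I
  set ρ : ℝ := (β - α) / 2 with hρ
  have hw : (α + β) / 2 ≤ ‖w‖ := by
    simpa [w] using (le_abs_self _).trans (Complex.abs_im_le_norm w)
  have hρw : 0 < ‖w‖ - ρ := by linarith
  have hratio : (‖w‖ + ρ) / (‖w‖ - ρ) ≤ β / α := by
    have := add_div_sub_le_add_div_sub (by linarith) (by linarith) hw (ρ := ρ)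
    rwa [show (α + β) / 2 + ρ = β by ring, show (α + β) / 2 - ρ = α by ring] at this
  calc deltaC (complexCone Cr) (x + I • y) x
      ≤ elog (ENNReal.ofReal (1 / (‖w‖ - ρ) / (1 / (‖w‖ + ρ)))) := by
        refine deltaC_le_elog_of_forall_mem_ECset (by positivity) fun z hz => ?_
        obtain ⟨h₁, h₂⟩ := one_lt_mul_norm_and_mul_norm_lt_one (hsub hz)
        rw [div_le_iff₀ (by linarith), le_div_iff₀ hρw]
        constructor <;> linarith
    _ ≤ elog (ENNReal.ofReal (β / α)) := by
        rw [div_div_div_cancel_left' _ _ one_ne_zero]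
        exact elog_mono (ENNReal.ofReal_le_ofReal hratio)

end ComplexCone

section RealForm

variable {V : Type*} [AddCommGroup V] [Module ℂ V] {Vr : Submodule ℝ V}

lemma eq_and_eq_of_add_I_smul_eq (huniq : ∀ u ∈ Vr, ∀ v ∈ Vr, u + I • v = 0 → u = 0 ∧ v = 0)
    {u v u' v' : V} (hu : u ∈ Vr) (hv : v ∈ Vr) (hu' : u' ∈ Vr) (hv' : v' ∈ Vr)
    (h : u + I • v = u' + I • v') : u = u' ∧ v = v' := by
  have := huniq _ (Vr.sub_mem hu hu') _ (Vr.sub_mem hv hv')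
    (by rw [smul_sub, sub_add_sub_comm, h, sub_self])
  simpa only [sub_eq_zero] using this

lemma linearIndependent_complex_of_real
    (huniq : ∀ u ∈ Vr, ∀ v ∈ Vr, u + I • v = 0 → u = 0 ∧ v = 0) {x y : V} (hx : x ∈ Vr)
    (hy : y ∈ Vr) (hind : LinearIndependent ℝ ![x, y]) : LinearIndependent ℂ ![x, y] := by
  refine LinearIndependent.pair_iff.2 fun a b hab => ?_
  have hsplit : (a.re • x + b.re • y) + I • (a.im • x + b.im • y) = 0 := by
    rw [← hab, smul_eq_re_smul_add_I_smul a, smul_eq_re_smul_add_I_smul b]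
    module
  have hmem : ∀ s t : ℝ, s • x + t • y ∈ Vr := fun s t =>
    Vr.add_mem (Vr.smul_mem s hx) (Vr.smul_mem t hy)
  obtain ⟨hre, him⟩ := huniq _ (hmem _ _) _ (hmem _ _) hsplit
  obtain ⟨hre₁, hre₂⟩ := LinearIndependent.pair_iff.1 hind _ _ hre
  obtain ⟨him₁, him₂⟩ := LinearIndependent.pair_iff.1 hind _ _ him
  exact ⟨Complex.ext hre₁ him₁, Complex.ext hre₂ him₂⟩

lemma mem_or_neg_mem_of_mem_complexCone
    (huniq : ∀ u ∈ Vr, ∀ v ∈ Vr, u + I • v = 0 → u = 0 ∧ v = 0) {Cr : Set V}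
    (hsub : Cr ⊆ Vr) (hsmul : ∀ t : ℝ, 0 ≤ t → ∀ u ∈ Cr, t • u ∈ Cr) {r : V} (hr : r ∈ Vr)
    (h : r ∈ complexCone Cr) : r ∈ Cr ∨ -r ∈ Cr := by
  obtain ⟨-, c, hc, u, hu, v, hv, hruv⟩ := h
  -- compare the real and imaginary parts of `conj c • r = normSq c • (u + I • v)`
  have hconj : c.re • r + I • ((-c.im) • r) = normSq c • u + I • (normSq c • v) := by
    rw [← Complex.conj_re, ← Complex.conj_im, ← smul_eq_re_smul_add_I_smul, hruv, smul_smul,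
      mul_comm, Complex.mul_conj, Complex.coe_smul, smul_add, smul_comm]
  obtain ⟨hre, him⟩ := eq_and_eq_of_add_I_smul_eq huniq (Vr.smul_mem _ hr)
    (Vr.smul_mem _ hr) (Vr.smul_mem _ (hsub hu)) (Vr.smul_mem _ (hsub hv)) hconj
  have hc' : c.re ≠ 0 ∨ -c.im ≠ 0 := by
    rw [neg_ne_zero, ← not_and_or]
    exact fun h => hc (Complex.ext h.1 h.2)
  rcases hc' with hc' | hc'
  · exact mem_or_neg_mem_of_smul_mem hsmul hc' (hre ▸ hsmul _ (normSq_nonneg c) u hu)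
  · exact mem_or_neg_mem_of_smul_mem hsmul hc' (him ▸ hsmul _ (normSq_nonneg c) v hv)

lemma elog_div_le_deltaC_complexCone
    (huniq : ∀ u ∈ Vr, ∀ v ∈ Vr, u + I • v = 0 → u = 0 ∧ v = 0)
    {Cr : Set V} (hsub : Cr ⊆ Vr) (hsmul : ∀ t : ℝ, 0 ≤ t → ∀ u ∈ Cr, t • u ∈ Cr)
    {x y : V} (hx : x ∈ Vr) (hy : y ∈ Vr) {α : ℝ}
    (hα : IsGreatest {t : ℝ | 0 ≤ t ∧ y - t • x ∈ Cr} α) (b : ℝ≥0∞)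
    (hαb : ENNReal.ofReal α < b) (hb : ∀ t : ℝ, ENNReal.ofReal t < b → t • x - y ∉ Cr) :
    elog (b / ENNReal.ofReal α) ≤ deltaC (complexCone Cr) x y := by
  refine elog_div_le_deltaC hαb fun t hαt htb hmem => ?_
  have ht : α < t := (ENNReal.ofReal_lt_ofReal_iff'.1 hαt).1
  rw [Complex.coe_smul] at hmem
  rcases mem_or_neg_mem_of_mem_complexCone huniq hsub hsmul
    (Vr.sub_mem (Vr.smul_mem t hx) hy) hmem with h | h
  · exact hb t htb h
  · rw [neg_sub] at h
    exact (hα.2 ⟨hα.1.1.trans ht.le, h⟩).not_gt ht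

end RealForm

theorem deltaC_add_I_smul_le_general
    {V : Type*} [NormedAddCommGroup V] [NormedSpace ℂ V]
    (Vr : Submodule ℝ V)
    (hUniq : ∀ u ∈ Vr, ∀ v ∈ Vr, u + Complex.I • v = 0 → u = 0 ∧ v = 0)
    (Cr : Set V) (hCrSub : Cr ⊆ (Vr : Set V)) (hCrClosed : IsClosed Cr)
    (hCrAdd : ∀ u ∈ Cr, ∀ v ∈ Cr, u + v ∈ Cr)
    (hCrSmul : ∀ t : ℝ, 0 ≤ t → ∀ u ∈ Cr, t • u ∈ Cr)
    (hCrProper : ∀ u ∈ Cr, -u ∈ Cr → u = 0)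
    (x y : V) (hx : x ∈ Cr) (hy : y ∈ Cr)
    (hind : LinearIndependent ℝ ![x, y]) :
    deltaC (complexCone Cr) (x + Complex.I • y) x ≤ deltaC (complexCone Cr) x y := by
  obtain ⟨α, hα⟩ := exists_isGreatest_sub_smul_mem hCrClosed hCrAdd hCrSmul hCrProper hx
    (hind.ne_zero 0) hy
  have hRHS := elog_div_le_deltaC_complexCone hUniq hCrSub hCrSmul (hCrSub hx) (hCrSub hy) hα
  have hlt : ∀ {t}, t • x - y ∈ Cr → α < t :=
    lt_of_sub_smul_mem_of_smul_sub_mem hCrAdd hCrSmul hCrProper hind hx hα.1.2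
  rcases {t : ℝ | t • x - y ∈ Cr}.eq_empty_or_nonempty with hT | hT
  · have := hRHS ⊤ ENNReal.ofReal_lt_top fun t _ ht => hT.subset ht
    rw [ENNReal.top_div_of_ne_top ENNReal.ofReal_ne_top, elog_top] at this
    exact le_top.trans this
  obtain ⟨β, hβ⟩ : ∃ β, IsLeast {t : ℝ | t • x - y ∈ Cr} β :=
    ⟨_, IsClosed.isLeast_csInf (hCrClosed.preimage (by fun_prop)) hT
      ⟨α, fun _ ht => (hlt ht).le⟩⟩
  have hαβ : α < β := hlt hβ.1
  replace hRHS := hRHS (ENNReal.ofReal β)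
    (ENNReal.ofReal_lt_ofReal_iff'.2 ⟨hαβ, hα.1.1.trans_lt hαβ⟩)
    fun t ht htT => (ENNReal.ofReal_lt_ofReal_iff'.1 ht).1.not_ge (hβ.2 htT)
  rcases hα.1.1.eq_or_lt with hα0 | hα0
  · rw [← hα0, ENNReal.ofReal_zero, ENNReal.div_zero (by simpa [hα0] using hαβ),
      elog_top] at hRHS
    exact le_top.trans hRHS
  rw [← ENNReal.ofReal_div_of_pos hα0] at hRHS
  exact (deltaC_add_I_smul_le_elog_div hCrAdd hCrSmul hα0 hαβ hβ.1 hα.1.2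
    (linearIndependent_complex_of_real hUniq (hCrSub hx) (hCrSub hy) hind)).trans hRHS

/-- for independent x, y in the real cone, the projective distance from
x + i y to x is at most the projective distance from x to y. -/
theorem deltaC_add_I_smul_le
    {V : Type*} [NormedAddCommGroup V] [NormedSpace ℂ V]
    (Vr : Submodule ℝ V) (hVrClosed : IsClosed (Vr : Set V))
    (hSpan : ∀ x : V, ∃ u ∈ Vr, ∃ v ∈ Vr, x = u + Complex.I • v)
    (hUniq : ∀ u ∈ Vr, ∀ v ∈ Vr, u + Complex.I • v = 0 → u = 0 ∧ v = 0)
    (Cr : Set V) (hCrSub : Cr ⊆ (Vr : Set V)) (hCrClosed : IsClosed Cr)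
    (hCrAdd : ∀ u ∈ Cr, ∀ v ∈ Cr, u + v ∈ Cr)
    (hCrSmul : ∀ t : ℝ, 0 ≤ t → ∀ u ∈ Cr, t • u ∈ Cr)
    (hCrProper : ∀ u ∈ Cr, -u ∈ Cr → u = 0)
    (hCrNontriv : ∃ u ∈ Cr, ∃ v ∈ Cr, LinearIndependent ℝ ![u, v])
    (x y : V) (hx : x ∈ Cr) (hx0 : x ≠ 0) (hy : y ∈ Cr) (hy0 : y ≠ 0)
    (hind : LinearIndependent ℝ ![x, y]) :
    deltaC (complexCone Cr) (x + Complex.I • y) x ≤ deltaC (complexCone Cr) x y :=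
  deltaC_add_I_smul_le_general Vr hUniq Cr hCrSub hCrClosed hCrAdd hCrSmul hCrProper x y hx hy hind
end

section
/- For all x, y ∈ C_ℝ \ {0}, δ_C(x, y) = h_{C_ℝ}(x, y); that is, the inclusion of (C_ℝ \ {0}, h_{C_ℝ}) into (C_ℂ \ {0}, δ_C) is an isometric embedding. -/
open Complex

/-! On a real vector `t • x - y`, membership in the complexified cone just means that
`±(t • x - y) ∈ C_ℝ \ {0}`, so the real points of `E_C(x, y)` fill the gap between the Hilbert
gauges `α ≤ β` of `x, y` (or are `α` itself when `y = α • x`). Conversely, `z • x - y` is in the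
complex cone as soon as `|z| < α` or `|z| > β`, because some rotation `c • (z • x - y)` then has
real and imaginary parts in `C_ℝ`. So `|z|` has infimum `α` and supremum `β` on `E_C(x, y)`. -/

open Filter Topology Set

theorem sSup_eq_and_sInf_eq_of_Ioo_subset_of_subset_Icc {L : Type*} [CompleteLinearOrder L]
    [DenselyOrdered L] {S : Set L} {a b : L} (hS : S ⊆ Icc a b) (hne : S.Nonempty)
    (hIoo : Ioo a b ⊆ S) :
    sSup S = b ∧ sInf S = a := by
  obtain ⟨c, hc⟩ := hne
  rcases ((hS hc).1.trans (hS hc).2).lt_or_eq with hab | rfl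
  · exact ⟨(sSup_le fun _ h => (hS h).2).antisymm ((csSup_Ioo hab).ge.trans (sSup_le_sSup hIoo)),
      ((sInf_le_sInf hIoo).trans (csInf_Ioo hab).le).antisymm (le_sInf fun _ h => (hS h).1)⟩
  · rw [(Set.Nonempty.subset_singleton_iff ⟨c, hc⟩).1 (Icc_self a ▸ hS)]
    exact ⟨sSup_singleton, sInf_singleton⟩

theorem ENNReal.sSup_ofReal_eq_of_isGreatest {P : ℝ → Prop} {α : ℝ}
    (hα : IsGreatest {s | 0 ≤ s ∧ P s} α) :
    sSup {t : ENNReal | ∃ s : ℝ, 0 ≤ s ∧ t = ENNReal.ofReal s ∧ P s} = ENNReal.ofReal α := by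
  refine IsGreatest.csSup_eq ⟨⟨α, hα.1.1, rfl, hα.1.2⟩, ?_⟩
  rintro _ ⟨s, hs0, rfl, hs⟩
  exact ENNReal.ofReal_le_ofReal (hα.2 ⟨hs0, hs⟩)

namespace PointedCone

variable {V : Type*} [AddCommGroup V] [Module ℝ V] {K : PointedCone ℝ V}

lemma nonneg_of_smul_mem (hK : (K : ConvexCone ℝ V).Salient) {x : V} (hx : x ∈ K)
    (hx0 : x ≠ 0) {t : ℝ} (ht : t • x ∈ K) : 0 ≤ t := by
  by_contra! htneg
  exact hK _ ht (smul_ne_zero htneg.ne hx0) (by simpa using K.smul_mem (neg_nonneg.2 htneg.le) hx)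

lemma mem_or_neg_mem_of_smul_mem {w : V} {t : ℝ} (ht : t ≠ 0) (h : t • w ∈ K) :
    w ∈ K ∨ -w ∈ K := by
  rcases ht.lt_or_gt with ht | ht
  · exact .inr ((K.smul_mem_iff (neg_pos.2 ht)).1 (by rwa [neg_smul_neg]))
  · exact .inl ((K.smul_mem_iff ht).1 h)

/-- These are the real and imaginary parts of `(1 - t I) • ((a • x - y) + I • (c • x))`. -/
lemma exists_rotation_mem {x y : V} (hx : x ∈ K) (hy : y ∈ K) {s a c : ℝ} (hs : 0 < s)
    (hsxy : s • x - y ∈ K) (hc : 0 ≤ c) (hsac : s ^ 2 < a ^ 2 + c ^ 2) (hac : s ≤ a ∨ 0 < c) :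
    ∃ t : ℝ, 0 ≤ t ∧ (a • x - y) + t • (c • x) ∈ K ∧ c • x - t • (a • x - y) ∈ K := by
  rcases le_or_gt s a with hsa | has
  · refine ⟨0, le_rfl, ?_, by simpa using K.smul_mem hc hx⟩
    convert K.add_mem hsxy (K.smul_mem (sub_nonneg.2 hsa) hx) using 1
    module
  · have hc0 : 0 < c := hac.resolve_left has.not_ge
    have ht : 0 ≤ (s - a) / c := div_nonneg (sub_nonneg.2 has.le) hc0.le
    have hca : 0 ≤ c - (s - a) / c * a := by
      rw [sub_nonneg, div_mul_eq_mul_div, div_le_iff₀ hc0]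
      nlinarith [mul_pos hs (sub_pos.2 has)]
    refine ⟨(s - a) / c, ht, ?_, ?_⟩
    · rw [smul_smul, div_mul_cancel₀ _ hc0.ne']
      convert hsxy using 1
      module
    · convert K.add_mem (K.smul_mem hca hx) (K.smul_mem ht hy) using 1
      module

end PointedCone

section ComplexCone

variable {V : Type*} [AddCommGroup V] [Module ℂ V]

lemma ofReal_add_ofReal_mul_I_smul (p q : ℝ) (w₁ w₂ : V) :
    ((p : ℂ) + q * I) • (w₁ + I • w₂) = (p • w₁ - q • w₂) + I • (q • w₁ + p • w₂) := by
  simp only [← Complex.coe_smul]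
  match_scalars
  · ring
  · linear_combination (q : ℂ) * I_sq

lemma smul_eq_re_smul_add_I_smul_im (z : ℂ) (w : V) : z • w = z.re • w + I • (z.im • w) := by
  simpa using ofReal_add_ofReal_mul_I_smul z.re z.im w 0

lemma add_I_smul_mem_complexCone {K : PointedCone ℝ V} {w₁ w₂ : V} (hw : w₁ + I • w₂ ≠ 0)
    {p q : ℝ} (hpq : p ≠ 0 ∨ q ≠ 0) (h₁ : p • w₁ - q • w₂ ∈ K) (h₂ : q • w₁ + p • w₂ ∈ K) :
    w₁ + I • w₂ ∈ complexCone (K : Set V) := by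
  have hc : (p : ℂ) + q * I ≠ 0 := by
    contrapose! hpq
    simpa using And.intro (congrArg re hpq) (congrArg im hpq)
  refine ⟨hw, ((p : ℂ) + q * I)⁻¹, inv_ne_zero hc, _, h₁, _, h₂, ?_⟩
  rw [← ofReal_add_ofReal_mul_I_smul, inv_smul_smul₀ hc]

variable {Vr : Submodule ℝ V}

lemma notMem_complexCone_of_mem_submodule
    (hUniq : ∀ u ∈ Vr, ∀ v ∈ Vr, u + I • v = 0 → u = 0 ∧ v = 0)
    {K : PointedCone ℝ V} (hKVr : (K : Set V) ⊆ Vr) {w : V} (hw : w ∈ Vr) (h₁ : w ∉ K)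
    (h₂ : -w ∉ K) :
    w ∉ complexCone (K : Set V) := by
  rintro ⟨-, c, hc, u, hu, v, hv, rfl⟩
  set p := c⁻¹.re
  set q := c⁻¹.im
  have hdecomp : u + I • v = p • c • (u + I • v) + I • (q • c • (u + I • v)) := by
    rw [← smul_eq_re_smul_add_I_smul_im, inv_smul_smul₀ hc]
  obtain ⟨hu', hv'⟩ := hUniq _ (sub_mem (hKVr hu) (Vr.smul_mem p hw))
    _ (sub_mem (hKVr hv) (Vr.smul_mem q hw))
    (by rw [smul_sub, sub_add_sub_comm, ← hdecomp, sub_self])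
  rw [sub_eq_zero] at hu' hv'
  have hpq : p ≠ 0 ∨ q ≠ 0 := by
    by_contra! h0
    exact inv_ne_zero hc (Complex.ext h0.1 h0.2)
  rcases hpq with hp | hq
  · exact (K.mem_or_neg_mem_of_smul_mem hp (hu' ▸ hu)).elim h₁ h₂
  · exact (K.mem_or_neg_mem_of_smul_mem hq (hv' ▸ hv)).elim h₁ h₂

lemma im_eq_zero_and_re_smul_eq_of_smul_eq
    (hUniq : ∀ u ∈ Vr, ∀ v ∈ Vr, u + I • v = 0 → u = 0 ∧ v = 0) {x y : V} (hx : x ∈ Vr)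
    (hy : y ∈ Vr) (hx0 : x ≠ 0)
    {z : ℂ} (h : z • x = y) : z.im = 0 ∧ z.re • x = y := by
  rw [smul_eq_re_smul_add_I_smul_im] at h
  obtain ⟨h₁, h₂⟩ := hUniq (z.re • x - y) (sub_mem (Vr.smul_mem _ hx) hy) (z.im • x)
    (Vr.smul_mem _ hx) (by rw [← h]; abel)
  exact ⟨(smul_eq_zero.1 h₂).resolve_right hx0, sub_eq_zero.1 h₁⟩

variable {K : PointedCone ℝ V} {x y : V}

lemma smul_sub_mem_complexCone_of_lt_norm
    (hUniq : ∀ u ∈ Vr, ∀ v ∈ Vr, u + I • v = 0 → u = 0 ∧ v = 0) (hKVr : (K : Set V) ⊆ Vr)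
    (hK : (K : ConvexCone ℝ V).Salient) (hx : x ∈ K) (hx0 : x ≠ 0) (hy : y ∈ K) {s : ℝ}
    (hs : 0 < s) (hsxy : s • x - y ∈ K) {z : ℂ} (hz : s < ‖z‖) :
    z • x - y ∈ complexCone (K : Set V) := by
  have hsq : s ^ 2 < z.re ^ 2 + z.im ^ 2 := by
    nlinarith [sq_norm_sub_sq_re z]
  have hne : z • x - y ≠ 0 := by
    intro h
    obtain ⟨him, hre⟩ := im_eq_zero_and_re_smul_eq_of_smul_eq hUniq (hKVr hx) (hKVr hy) hx0
      (sub_eq_zero.1 h)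
    have h₁ : 0 ≤ z.re := K.nonneg_of_smul_mem hK hx hx0 (hre ▸ hy)
    have h₂ : 0 ≤ s - z.re := K.nonneg_of_smul_mem hK hx hx0 (by rwa [sub_smul, hre])
    rw [← abs_re_eq_norm.2 him, abs_of_nonneg h₁] at hz
    linarith
  rw [smul_eq_re_smul_add_I_smul_im, add_sub_right_comm] at hne ⊢
  rcases le_or_gt 0 z.im with hb | hb
  · by_cases hcase : s ≤ z.re ∨ 0 < z.im
    · obtain ⟨t, -, h₁, h₂⟩ := K.exists_rotation_mem hx hy hs hsxy hb hsq hcase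
      exact add_I_smul_mem_complexCone hne (p := 1) (q := -t) (.inl one_ne_zero)
        (by simpa using h₁) (by convert h₂ using 1; module)
    · push Not at hcase
      have hb0 : z.im = 0 := le_antisymm hcase.2 hb
      have hre : z.re ≤ 0 := by nlinarith
      refine add_I_smul_mem_complexCone hne (p := -1) (q := 0) (.inl (by norm_num)) ?_
        (by simp [hb0])
      convert K.add_mem hy (K.smul_mem (neg_nonneg.2 hre) hx) using 1
      module
  · obtain ⟨t, -, h₁, h₂⟩ := K.exists_rotation_mem hx hy hs hsxy (c := -z.im) (by linarith)
      (by simpa using hsq) (.inr (by linarith))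
    exact add_I_smul_mem_complexCone hne (p := -t) (q := 1) (.inr one_ne_zero)
      (by convert h₂ using 1; module) (by convert h₁ using 1; module)

lemma smul_sub_mem_complexCone_of_norm_lt
    (hUniq : ∀ u ∈ Vr, ∀ v ∈ Vr, u + I • v = 0 → u = 0 ∧ v = 0) (hKVr : (K : Set V) ⊆ Vr)
    (hK : (K : ConvexCone ℝ V).Salient) (hx : x ∈ K) (hx0 : x ≠ 0) (hy : y ∈ K) {s : ℝ}
    (hsxy : y - s • x ∈ K) {z : ℂ} (hz : ‖z‖ < s) :
    z • x - y ∈ complexCone (K : Set V) := by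
  have hre : z.re < s := (re_le_norm z).trans_lt hz
  have hne : z • x - y ≠ 0 := by
    intro h
    obtain ⟨-, hre'⟩ := im_eq_zero_and_re_smul_eq_of_smul_eq hUniq (hKVr hx) (hKVr hy) hx0
      (sub_eq_zero.1 h)
    have := K.nonneg_of_smul_mem hK hx hx0 (t := z.re - s) (by rwa [sub_smul, hre'])
    linarith
  have hyx : y - z.re • x ∈ K := by
    convert K.add_mem hsxy (K.smul_mem (sub_nonneg.2 hre.le) hx) using 1
    module
  rw [smul_eq_re_smul_add_I_smul_im, add_sub_right_comm] at hne ⊢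
  rcases le_or_gt z.im 0 with hb | hb
  · exact add_I_smul_mem_complexCone hne (p := -1) (q := 0) (.inl (by norm_num))
      (by simpa using hyx) (by simpa using K.smul_mem (neg_nonneg.2 hb) hx)
  · exact add_I_smul_mem_complexCone hne (p := 0) (q := -1) (.inr (by norm_num))
      (by simpa using K.smul_mem hb.le hx) (by simpa using hyx)

lemma ofReal_mem_ECset (hUniq : ∀ u ∈ Vr, ∀ v ∈ Vr, u + I • v = 0 → u = 0 ∧ v = 0)
    (hKVr : (K : Set V) ⊆ Vr) (hx : x ∈ Vr) (hy : y ∈ Vr) {t : ℝ} (h₁ : t • x - y ∉ K)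
    (h₂ : y - t • x ∉ K) : (t : ℂ) ∈ ECset (complexCone (K : Set V)) x y := by
  change (t : ℂ) • x - y ∉ _
  rw [Complex.coe_smul]
  exact notMem_complexCone_of_mem_submodule hUniq hKVr (sub_mem (Vr.smul_mem t hx) hy) h₁
    (by rwa [neg_sub])

lemma image_nnnorm_ECset_subset_Icc
    (hUniq : ∀ u ∈ Vr, ∀ v ∈ Vr, u + I • v = 0 → u = 0 ∧ v = 0) (hKVr : (K : Set V) ⊆ Vr)
    (hK : (K : ConvexCone ℝ V).Salient) (hx : x ∈ K) (hx0 : x ≠ 0) (hy : y ∈ K) {α : ℝ}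
    (hα : y - α • x ∈ K) :
    (fun z : ℂ => (‖z‖₊ : ENNReal)) '' ECset (complexCone (K : Set V)) x y ⊆
      Icc (ENNReal.ofReal α)
        (sInf {t : ENNReal | ∃ s : ℝ, 0 < s ∧ t = ENNReal.ofReal s ∧ s • x - y ∈ K}) := by
  rintro _ ⟨z, hz, rfl⟩
  dsimp only
  rw [← enorm_eq_nnnorm, ← ofReal_norm]
  refine ⟨ENNReal.ofReal_le_ofReal ?_, le_sInf ?_⟩
  · exact not_lt.1 fun h => hz (smul_sub_mem_complexCone_of_norm_lt hUniq hKVr hK hx hx0 hy hα h)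
  · rintro _ ⟨s, hs, rfl, hsxy⟩
    exact ENNReal.ofReal_le_ofReal <| not_lt.1 fun h =>
      hz (smul_sub_mem_complexCone_of_lt_norm hUniq hKVr hK hx hx0 hy hs hsxy h)

lemma Ioo_subset_image_nnnorm_ECset
    (hUniq : ∀ u ∈ Vr, ∀ v ∈ Vr, u + I • v = 0 → u = 0 ∧ v = 0) (hKVr : (K : Set V) ⊆ Vr)
    (hx : x ∈ Vr) (hy : y ∈ Vr) {α : ℝ} (hα : IsGreatest {s : ℝ | 0 ≤ s ∧ y - s • x ∈ K} α) :
    Ioo (ENNReal.ofReal α)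
        (sInf {t : ENNReal | ∃ s : ℝ, 0 < s ∧ t = ENNReal.ofReal s ∧ s • x - y ∈ K}) ⊆
      (fun z : ℂ => (‖z‖₊ : ENNReal)) '' ECset (complexCone (K : Set V)) x y := by
  rintro e ⟨hαe, heβ⟩
  have he : e ≠ ⊤ := heβ.ne_top
  have hαt : α < e.toReal := by
    rw [← ENNReal.ofReal_toReal he, ENNReal.ofReal_lt_ofReal_iff'] at hαe
    exact hαe.1
  have ht0 : 0 < e.toReal := hα.1.1.trans_lt hαt
  refine ⟨e.toReal, ofReal_mem_ECset hUniq hKVr hx hy ?_ ?_, ?_⟩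
  · exact fun h => heβ.not_ge (sInf_le ⟨e.toReal, ht0, (ENNReal.ofReal_toReal he).symm, h⟩)
  · exact fun h => (hα.2 ⟨ht0.le, h⟩).not_gt hαt
  · dsimp only
    rw [← enorm_eq_nnnorm, ← ofReal_norm, norm_real, Real.norm_of_nonneg ht0.le,
      ENNReal.ofReal_toReal he]

end ComplexCone

namespace PointedCone

variable {V : Type*} [AddCommGroup V] [Module ℝ V] [TopologicalSpace V] [IsTopologicalAddGroup V]
  [ContinuousSMul ℝ V] {K : PointedCone ℝ V} {x y : V}

lemma bddAbove_setOf_sub_smul_mem (hKc : IsClosed (K : Set V))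
    (hK : (K : ConvexCone ℝ V).Salient) (hx : x ∈ K) (hx0 : x ≠ 0) :
    BddAbove {s : ℝ | 0 ≤ s ∧ y - s • x ∈ K} := by
  by_contra hunb
  have hfreq : ∃ᶠ s in atTop, s⁻¹ • y - x ∈ K := frequently_atTop.2 fun a => by
    obtain ⟨s, ⟨hs0, hs⟩, has⟩ := not_bddAbove_iff.1 hunb (max a 1)
    have hspos : 0 < s := lt_of_lt_of_le one_pos (le_max_right a 1) |>.trans has
    refine ⟨s, (le_max_left a 1).trans has.le, ?_⟩
    simpa [smul_sub, smul_smul, inv_mul_cancel₀ hspos.ne'] using K.smul_mem (inv_nonneg.2 hs0) hs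
  have hlim : Tendsto (fun s : ℝ => s⁻¹ • y - x) atTop (𝓝 (-x)) := by
    simpa using ((tendsto_inv_atTop_zero (𝕜 := ℝ)).smul_const y).sub_const x
  exact hK x hx hx0 (hKc.mem_of_frequently_of_tendsto hfreq hlim)

lemma exists_isGreatest_setOf_sub_smul_mem (hKc : IsClosed (K : Set V))
    (hK : (K : ConvexCone ℝ V).Salient) (hx : x ∈ K) (hx0 : x ≠ 0) (hy : y ∈ K) :
    ∃ α, IsGreatest {s : ℝ | 0 ≤ s ∧ y - s • x ∈ K} α :=
  ⟨_, IsClosed.isGreatest_csSup (isClosed_Ici.inter (hKc.preimage (by fun_prop)))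
    ⟨0, le_rfl, by simpa using hy⟩ (bddAbove_setOf_sub_smul_mem hKc hK hx hx0)⟩

end PointedCone

section ECsetNonempty

variable {V : Type*} [AddCommGroup V] [Module ℂ V] [TopologicalSpace V] [IsTopologicalAddGroup V]
  [ContinuousSMul ℝ V] {Vr : Submodule ℝ V} {K : PointedCone ℝ V} {x y : V}

lemma nonempty_ECset (hUniq : ∀ u ∈ Vr, ∀ v ∈ Vr, u + I • v = 0 → u = 0 ∧ v = 0)
    (hKVr : (K : Set V) ⊆ Vr) (hKc : IsClosed (K : Set V)) (hK : (K : ConvexCone ℝ V).Salient)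
    (hx : x ∈ K) (hx0 : x ≠ 0) (hy : y ∈ K) : (ECset (complexCone (K : Set V)) x y).Nonempty := by
  obtain ⟨α, ⟨hα0, hαy⟩, hαmax⟩ := K.exists_isGreatest_setOf_sub_smul_mem hKc hK hx hx0 hy
  by_cases hα : α • x - y ∈ K
  · have h0 : α • x - y = 0 := by_contra fun h0 => hK _ hα h0 (by rwa [neg_sub])
    refine ⟨α, ?_⟩
    change (α : ℂ) • x - y ∉ _
    rw [Complex.coe_smul, h0]
    exact fun h => h.1 rfl
  · have hev : ∀ᶠ t in 𝓝[>] α, t • x - y ∉ K :=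
      nhdsWithin_le_nhds ((hKc.isOpen_compl.preimage (by fun_prop)).mem_nhds hα)
    obtain ⟨t, ht, hαt⟩ := (hev.and self_mem_nhdsWithin).exists
    exact ⟨t, ofReal_mem_ECset hUniq hKVr (hKVr hx) (hKVr hy) ht
      fun h => (hαmax ⟨hα0.trans hαt.le, h⟩).not_gt hαt⟩

end ECsetNonempty

theorem deltaC_eq_hilbertMetric_general
    {V : Type*} [NormedAddCommGroup V] [NormedSpace ℂ V]
    (Vr : Submodule ℝ V)
    (hUniq : ∀ u ∈ Vr, ∀ v ∈ Vr, u + Complex.I • v = 0 → u = 0 ∧ v = 0)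
    (Cr : Set V) (hCrSub : Cr ⊆ (Vr : Set V)) (hCrClosed : IsClosed Cr)
    (hCrAdd : ∀ u ∈ Cr, ∀ v ∈ Cr, u + v ∈ Cr)
    (hCrSmul : ∀ t : ℝ, 0 ≤ t → ∀ u ∈ Cr, t • u ∈ Cr)
    (hCrProper : ∀ u ∈ Cr, -u ∈ Cr → u = 0)
    (x y : V) (hx : x ∈ Cr) (hx0 : x ≠ 0) (hy : y ∈ Cr) :
    deltaC (complexCone Cr) x y = hilbertMetric Cr x y := by
  let K : PointedCone ℝ V :=
    { carrier := Cr
      add_mem' := fun hu hv => hCrAdd _ hu _ hv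
      zero_mem' := by simpa using hCrSmul 0 le_rfl x hx
      smul_mem' := fun c u hu => hCrSmul c c.2 u hu }
  have hK : (K : ConvexCone ℝ V).Salient := fun u hu hu0 hnu => hu0 (hCrProper u hu hnu)
  obtain ⟨α, hα⟩ := K.exists_isGreatest_setOf_sub_smul_mem hCrClosed hK hx hx0 hy
  obtain ⟨hsup, hinf⟩ := sSup_eq_and_sInf_eq_of_Ioo_subset_of_subset_Icc
    (image_nnnorm_ECset_subset_Icc hUniq hCrSub hK hx hx0 hy hα.1.2)
    ((nonempty_ECset hUniq hCrSub hCrClosed hK hx hx0 hy).image _)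
    (Ioo_subset_image_nnnorm_ECset hUniq hCrSub (hCrSub hx) (hCrSub hy) hα)
  rw [sSup_image] at hsup
  rw [sInf_image, ← ENNReal.sSup_ofReal_eq_of_isGreatest hα] at hinf
  exact congrArg elog (congrArg₂ (· / ·) hsup hinf)

/-- the projective metric of the complexified cone restricts to the
Hilbert metric on the real cone; the inclusion is an isometric embedding. -/
theorem deltaC_eq_hilbertMetric
    {V : Type*} [NormedAddCommGroup V] [NormedSpace ℂ V]
    (Vr : Submodule ℝ V) (hVrClosed : IsClosed (Vr : Set V))
    (hSpan : ∀ x : V, ∃ u ∈ Vr, ∃ v ∈ Vr, x = u + Complex.I • v)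
    (hUniq : ∀ u ∈ Vr, ∀ v ∈ Vr, u + Complex.I • v = 0 → u = 0 ∧ v = 0)
    (Cr : Set V) (hCrSub : Cr ⊆ (Vr : Set V)) (hCrClosed : IsClosed Cr)
    (hCrAdd : ∀ u ∈ Cr, ∀ v ∈ Cr, u + v ∈ Cr)
    (hCrSmul : ∀ t : ℝ, 0 ≤ t → ∀ u ∈ Cr, t • u ∈ Cr)
    (hCrProper : ∀ u ∈ Cr, -u ∈ Cr → u = 0)
    (hCrNontriv : ∃ u ∈ Cr, ∃ v ∈ Cr, LinearIndependent ℝ ![u, v])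
    (x y : V) (hx : x ∈ Cr) (hx0 : x ≠ 0) (hy : y ∈ Cr) (hy0 : y ≠ 0) :
    deltaC (complexCone Cr) x y = hilbertMetric Cr x y :=
  deltaC_eq_hilbertMetric_general Vr hUniq Cr hCrSub hCrClosed hCrAdd hCrSmul hCrProper x y hx hx0
    hy
end

section
/- Let x, y ∈ X with x ≠ y, let u ∈ C_ℝ \ {0}, and let z ∈ ℂ. Then ⟨l_{x,y}, L u⟩ > 0 and | ⟨l_{x,y}, L(z)u⟩ / ⟨l_{x,y}, L u⟩ − 1 | ≤ ε(z), where ε(z) = e^{|Re(z)|·‖f‖∞} · |z| · (‖f‖∞ + |f|_ℓ). -/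
/-!
For each inverse branch `j`, the cone condition for `u` at the points `σ_j x, σ_j y`, which are
`γ` times closer than `x, y`, together with the `G`-Lipschitz weight `g_j`, gives
`e^{g_j x} u (σ_j x) e^{d(x,y)/γ} ≤ e^{B d(x,y)} e^{g_j y} u (σ_j y)`.
Summing over `j`, `⟨l_{x,y}, L u⟩ ≥ (L u)(x) d(x,y)/γ > 0`.

With `a_j(p) = e^{g_j p} u (σ_j p)` and `E_j(p) = e^{z f(σ_j p)}`, the difference
`⟨l_{x,y}, L(z) u⟩ - ⟨l_{x,y}, L u⟩` is
`Σ_j (e^{B d} a_j(y) - a_j(x)) (E_j(y) - 1) + a_j(x) (E_j(y) - E_j(x))`.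
The first coefficients are nonnegative with sum `⟨l_{x,y}, L u⟩`; the second sum to `(L u)(x)`,
and `|E_j(y) - E_j(x)| ≤ e^{|Re z| ‖f‖∞} |z| |f|_ℓ d(x,y)/γ`, where `(L u)(x) d(x,y)/γ` is again at
most `⟨l_{x,y}, L u⟩`.
-/

open Complex

/-- Sup norm of a real-valued function. -/
noncomputable def supN {X : Type*} (u : X → ℝ) : ℝ := sSup (Set.range fun x => |u x|)

/-- Best Lipschitz constant of a real-valued function with respect to the distance d. -/
noncomputable def lipN {X : Type*} (d : X → X → ℝ) (u : X → ℝ) : ℝ :=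
  sInf {c : ℝ | 0 ≤ c ∧ ∀ x y, |u x - u y| ≤ c * d x y}

/-- Sup norm of a complex-valued function. -/
noncomputable def supNC {X : Type*} (u : X → ℂ) : ℝ :=
  sSup (Set.range fun x => ‖u x‖)

/-- Best Lipschitz constant of a complex-valued function with respect to the distance d. -/
noncomputable def lipNC {X : Type*} (d : X → X → ℝ) (u : X → ℂ) : ℝ :=
  sInf {c : ℝ | 0 ≤ c ∧ ∀ x y, ‖u x - u y‖ ≤ c * d x y}

/-- Bounded Lipschitz complex-valued functions. -/
def lipBddC {X : Type*} (d : X → X → ℝ) (u : X → ℂ) : Prop :=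
  (∃ c : ℝ, 0 ≤ c ∧ ∀ x y, ‖u x - u y‖ ≤ c * d x y) ∧
    ∃ M : ℝ, ∀ x, ‖u x‖ ≤ M

/-- The real Birkhoff cone of nonnegative bounded Lipschitz functions with
exp(B d(x,y)) u(y) ≥ u(x). -/
def coneR {X : Type*} (d : X → X → ℝ) (B : ℝ) : Set (X → ℝ) :=
  {u | (∃ c : ℝ, 0 ≤ c ∧ ∀ x y, |u x - u y| ≤ c * d x y) ∧ (∃ M : ℝ, ∀ x, |u x| ≤ M) ∧
    ∀ x y, u x ≤ Real.exp (B * d x y) * u y}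

/-- The real Birkhoff cone viewed inside complex-valued functions. -/
def coneRC {X : Type*} (d : X → X → ℝ) (B : ℝ) : Set (X → ℂ) :=
  {w | ∃ u ∈ coneR d B, w = fun x => ((u x : ℝ) : ℂ)}

/-- The (unperturbed) transfer operator on real-valued functions. -/
noncomputable def transferR {X : Type*} {J : Type*} (g : J → X → ℝ) (σb : J → X → X)
    (u : X → ℝ) : X → ℝ :=
  fun x => ∑' j, Real.exp (g j x) * u (σb j x)

/-- The (unperturbed) transfer operator on complex-valued functions. -/
noncomputable def transferC {X : Type*} {J : Type*} (g : J → X → ℝ) (σb : J → X → X)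
    (u : X → ℂ) : X → ℂ :=
  fun x => ∑' j, ((Real.exp (g j x) : ℝ) : ℂ) * u (σb j x)

/-- The perturbed transfer operator L(z). -/
noncomputable def transferZ {X : Type*} {J : Type*} (g : J → X → ℝ) (σb : J → X → X)
    (f : X → ℝ) (z : ℂ) (u : X → ℂ) : X → ℂ :=
  fun x => ∑' j, Complex.exp (((g j x : ℝ) : ℂ) + z * ((f (σb j x) : ℝ) : ℂ)) * u (σb j x)


lemma norm_cexp_sub_cexp_le {K : ℝ} {w₁ w₂ : ℂ} (h₁ : w₁.re ≤ K) (h₂ : w₂.re ≤ K) :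
    ‖Complex.exp w₁ - Complex.exp w₂‖ ≤ Real.exp K * ‖w₁ - w₂‖ :=
  (convex_halfSpace_re_le K).norm_image_sub_le_of_norm_deriv_le
    (fun _ _ => Complex.differentiableAt_exp)
    (fun w hw => by rw [Complex.deriv_exp, Complex.norm_exp]; exact Real.exp_le_exp.2 hw) h₂ h₁

section Seminorms

variable {X : Type*}

lemma nonneg_of_symm_of_triangle {d : X → X → ℝ} (hself : ∀ x, d x x = 0)
    (hsymm : ∀ x y, d x y = d y x) (htri : ∀ x y z, d x z ≤ d x y + d y z) (x y : X) :
    0 ≤ d x y := by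
  linarith [htri x y x, hself x, hsymm x y]

lemma abs_le_supN {f : X → ℝ} (hf : ∃ M, ∀ x, |f x| ≤ M) (t : X) : |f t| ≤ supN f := by
  obtain ⟨M, hM⟩ := hf
  exact le_csSup ⟨M, by rintro _ ⟨s, rfl⟩; exact hM s⟩ ⟨t, rfl⟩

lemma lipN_nonneg {d : X → X → ℝ} {f : X → ℝ}
    (hf : ∃ c, 0 ≤ c ∧ ∀ x y, |f x - f y| ≤ c * d x y) : 0 ≤ lipN d f :=
  le_csInf hf fun _ hc => hc.1

lemma abs_sub_le_lipN_mul {d : X → X → ℝ} {f : X → ℝ} (hd : ∀ x y, 0 ≤ d x y)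
    (hf : ∃ c, 0 ≤ c ∧ ∀ x y, |f x - f y| ≤ c * d x y) (a b : X) :
    |f a - f b| ≤ lipN d f * d a b := by
  obtain ⟨c, hc⟩ := hf
  rcases (hd a b).eq_or_lt with h | h
  · have := hc.2 a b
    rwa [← h, mul_zero] at this ⊢
  · rw [← div_le_iff₀ h]
    exact le_csInf ⟨c, hc⟩ fun e he => (div_le_iff₀ h).2 (he.2 a b)

lemma re_mul_ofReal_le {f : X → ℝ} (hf : ∃ M, ∀ x, |f x| ≤ M) (z : ℂ) (t : X) :
    (z * f t).re ≤ |z.re| * supN f := by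
  rw [Complex.re_mul_ofReal]
  exact (le_abs_self _).trans (by rw [abs_mul]; gcongr; exact abs_le_supN hf t)

lemma norm_cexp_mul_sub_one_le {f : X → ℝ} (hf : ∃ M, ∀ x, |f x| ≤ M) (z : ℂ) (t : X) :
    ‖Complex.exp (z * f t) - 1‖ ≤ Real.exp (|z.re| * supN f) * (‖z‖ * supN f) := by
  have h0 : (0 : ℂ).re ≤ |z.re| * supN f :=
    mul_nonneg (abs_nonneg _) ((abs_nonneg _).trans (abs_le_supN hf t))
  have := norm_cexp_sub_cexp_le (re_mul_ofReal_le hf z t) h0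
  rw [Complex.exp_zero, sub_zero, norm_mul, Complex.norm_real, Real.norm_eq_abs] at this
  exact this.trans (by gcongr; exact abs_le_supN hf t)

lemma norm_cexp_mul_sub_cexp_mul_le {f : X → ℝ} (hf : ∃ M, ∀ x, |f x| ≤ M) (z : ℂ) (s t : X) :
    ‖Complex.exp (z * f s) - Complex.exp (z * f t)‖
      ≤ Real.exp (|z.re| * supN f) * (‖z‖ * |f s - f t|) := by
  have := norm_cexp_sub_cexp_le (re_mul_ofReal_le hf z s) (re_mul_ofReal_le hf z t)
  rwa [← mul_sub, ← Complex.ofReal_sub, norm_mul, Complex.norm_real, Real.norm_eq_abs] at this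

end Seminorms

section Cone

variable {X : Type*} {d : X → X → ℝ} {B : ℝ} {u : X → ℝ}

lemma nonneg_of_mem_coneR {x y : X} (hu : u ∈ coneR d B) (hsymm : d x y = d y x)
    (hxy : 0 < B * d x y) (t : X) : 0 ≤ u t := by
  by_contra! ht
  have hcone := hu.2.2
  have hx : u x < 0 := (hcone x t).trans_lt (mul_neg_of_pos_of_neg (Real.exp_pos _) ht)
  have hy : u y < 0 := (hcone y t).trans_lt (mul_neg_of_pos_of_neg (Real.exp_pos _) ht)
  have hE : 1 < Real.exp (B * d x y) := Real.one_lt_exp_iff.2 hxy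
  have hcxy := hcone x y
  have hcyx := hcone y x
  rw [← hsymm] at hcyx
  nlinarith

lemma pos_of_mem_coneR (hu : u ∈ coneR d B) (hnn : ∀ t, 0 ≤ u t) (hu0 : u ≠ 0) (t : X) :
    0 < u t := by
  obtain ⟨s, hs⟩ : ∃ s, 0 < u s := by
    by_contra! h
    exact hu0 (funext fun s => (h s).antisymm (hnn s))
  by_contra! ht
  nlinarith [hu.2.2 s t, Real.exp_pos (B * d s t)]

/-- The choice of `B` makes `B = G + B / γ + 1 / γ`: the weight costs `exp (G d)`, the cone
condition along the contraction `s` costs `exp (B d / γ)`, and `exp (d / γ)` is left over. -/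
lemma exp_mul_mul_exp_le_of_mem_coneR {φ : X → ℝ} {s : X → X} {γ G : ℝ} {x y : X}
    (hγ : 1 < γ) (hB : B = (γ * G + 1) / (γ - 1)) (hB0 : 0 ≤ B) (hu : u ∈ coneR d B)
    (hnn : ∀ t, 0 ≤ u t) (hs : d (s x) (s y) ≤ γ⁻¹ * d x y) (hφ : |φ x - φ y| ≤ G * d x y) :
    Real.exp (φ x) * u (s x) * Real.exp (d x y / γ)
      ≤ Real.exp (B * d x y) * (Real.exp (φ y) * u (s y)) := by
  have hexp : (φ y + G * d x y) + B * (γ⁻¹ * d x y) + d x y / γ = B * d x y + φ y := by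
    have : γ - 1 ≠ 0 := by linarith
    rw [hB]; field_simp; ring
  have hφ' : Real.exp (φ x) ≤ Real.exp (φ y + G * d x y) :=
    Real.exp_le_exp.2 (by linarith [(abs_le.1 hφ).2])
  have hu' : u (s x) ≤ Real.exp (B * (γ⁻¹ * d x y)) * u (s y) :=
    (hu.2.2 _ _).trans <| mul_le_mul_of_nonneg_right
      (Real.exp_le_exp.2 (mul_le_mul_of_nonneg_left hs hB0)) (hnn _)
  calc Real.exp (φ x) * u (s x) * Real.exp (d x y / γ)
      ≤ Real.exp (φ y + G * d x y) * (Real.exp (B * (γ⁻¹ * d x y)) * u (s y))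
          * Real.exp (d x y / γ) := by gcongr; exact hnn _
    _ = Real.exp ((φ y + G * d x y) + B * (γ⁻¹ * d x y) + d x y / γ) * u (s y) := by
      simp only [Real.exp_add]; ring
    _ = Real.exp (B * d x y) * (Real.exp (φ y) * u (s y)) := by
      rw [hexp, Real.exp_add]; ring

end Cone

lemma norm_tsum_mul_sub_tsum_mul_sub_le {J : Type*} {a b : J → ℝ} {p q : J → ℂ} {c α β : ℝ}
    (ha : Summable a) (hb : Summable b) (ha0 : ∀ j, 0 ≤ a j) (hab : ∀ j, a j ≤ c * b j)
    (hp : ∀ j, ‖p j - 1‖ ≤ α) (hpq : ∀ j, ‖p j - q j‖ ≤ β) :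
    ‖(c : ℂ) * ∑' j, (b j : ℂ) * p j - ∑' j, (a j : ℂ) * q j
        - ((c * ∑' j, b j - ∑' j, a j : ℝ) : ℂ)‖
      ≤ (c * ∑' j, b j - ∑' j, a j) * α + (∑' j, a j) * β := by
  have hp_le : ∀ j, ‖p j‖ ≤ 1 + α := fun j => by
    linarith [norm_sub_norm_le (p j) 1, norm_one (α := ℂ), hp j]
  have hq_le : ∀ j, ‖q j‖ ≤ 1 + α + β := fun j => by
    linarith [norm_sub_norm_le (q j) (p j), norm_sub_rev (q j) (p j), hp_le j, hpq j]
  have hbp : Summable fun j => (b j : ℂ) * p j :=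
    (hb.abs.mul_right (1 + α)).of_norm_bounded fun j => by
      rw [norm_mul, Complex.norm_real, Real.norm_eq_abs]; gcongr; exact hp_le j
  have haq : Summable fun j => (a j : ℂ) * q j :=
    (ha.mul_right (1 + α + β)).of_norm_bounded fun j => by
      rw [norm_mul, Complex.norm_real, Real.norm_of_nonneg (ha0 j)]
      exact mul_le_mul_of_nonneg_left (hq_le j) (ha0 j)
  -- termwise: `c b p - a q - (c b - a) = (c b - a) (p - 1) + a (p - q)`
  have hsplit : HasSum (fun j => ((c * b j - a j : ℝ) : ℂ) * (p j - 1) + (a j : ℂ) * (p j - q j))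
      ((c : ℂ) * ∑' j, (b j : ℂ) * p j - ∑' j, (a j : ℂ) * q j
        - ((c * ∑' j, b j - ∑' j, a j : ℝ) : ℂ)) := by
    have h := ((hbp.hasSum.mul_left (c : ℂ)).sub haq.hasSum).sub
      (Complex.hasSum_ofReal.2 ((hb.hasSum.mul_left c).sub ha.hasSum))
    exact h.congr_fun fun j => by push_cast; ring
  refine hsplit.norm_le_of_bounded
    (((hb.hasSum.mul_left c).sub ha.hasSum).mul_right α |>.add (ha.hasSum.mul_right β)) fun j => ?_
  refine (norm_add_le _ _).trans (add_le_add ?_ ?_) <;>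
    rw [norm_mul, Complex.norm_real, Real.norm_eq_abs]
  · rw [abs_of_nonneg (sub_nonneg.2 (hab j))]
    exact mul_le_mul_of_nonneg_left (hp j) (sub_nonneg.2 (hab j))
  · rw [abs_of_nonneg (ha0 j)]
    exact mul_le_mul_of_nonneg_left (hpq j) (ha0 j)

section Transfer

variable {X J : Type*} {g : J → X → ℝ} {σb : J → X → X} {u : X → ℝ}

lemma summable_exp_mul_of_abs_le {M : ℝ} {p : X} (hg : Summable fun j => Real.exp (g j p))
    (hM : ∀ t, |u t| ≤ M) : Summable fun j => Real.exp (g j p) * u (σb j p) :=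
  (hg.mul_right M).of_norm_bounded fun j => by
    rw [Real.norm_eq_abs, abs_mul, Real.abs_exp]
    exact mul_le_mul_of_nonneg_left (hM _) (Real.exp_pos _).le

lemma transferR_pos [Nonempty J] {p : X}
    (hsum : Summable fun j => Real.exp (g j p) * u (σb j p)) (hu : ∀ t, 0 < u t) :
    0 < transferR g σb u p :=
  hsum.tsum_pos (fun _ => (mul_pos (Real.exp_pos _) (hu _)).le) (Classical.arbitrary J)
    (mul_pos (Real.exp_pos _) (hu _))

lemma transferR_mul_le_lxy_transferR {x y : X} {κ c : ℝ}
    (hx : Summable fun j => Real.exp (g j x) * u (σb j x))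
    (hy : Summable fun j => Real.exp (g j y) * u (σb j y)) (hnn : ∀ t, 0 ≤ u t)
    (h : ∀ j, Real.exp (g j x) * u (σb j x) * Real.exp κ ≤ c * (Real.exp (g j y) * u (σb j y))) :
    transferR g σb u x * κ ≤ c * transferR g σb u y - transferR g σb u x := by
  have hsum : transferR g σb u x * Real.exp κ ≤ c * transferR g σb u y := by
    unfold transferR
    rw [← tsum_mul_right, ← tsum_mul_left]
    exact Summable.tsum_le_tsum h (hx.mul_right _) (hy.mul_left c)
  have hpos : 0 ≤ transferR g σb u x :=
    tsum_nonneg fun _ => mul_nonneg (Real.exp_pos _).le (hnn _)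
  nlinarith [Real.add_one_le_exp κ]

lemma transferZ_ofReal (f : X → ℝ) (z : ℂ) (u : X → ℝ) (p : X) :
    transferZ g σb f z (fun t => (u t : ℂ)) p
      = ∑' j, ((Real.exp (g j p) * u (σb j p) : ℝ) : ℂ) * Complex.exp (z * f (σb j p)) := by
  unfold transferZ
  congr 1; funext j
  rw [Complex.exp_add, ← Complex.ofReal_exp]; push_cast; ring

lemma norm_lxy_transferZ_sub_lxy_transferR_le {f : X → ℝ} (hf : ∃ M, ∀ x, |f x| ≤ M) (z : ℂ)
    {x y : X} {c ℓ : ℝ} (hx : Summable fun j => Real.exp (g j x) * u (σb j x))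
    (hy : Summable fun j => Real.exp (g j y) * u (σb j y)) (hnn : ∀ t, 0 ≤ u t)
    (hxy : ∀ j, Real.exp (g j x) * u (σb j x) ≤ c * (Real.exp (g j y) * u (σb j y)))
    (hℓ : ∀ j, |f (σb j y) - f (σb j x)| ≤ ℓ) :
    ‖(c : ℂ) * transferZ g σb f z (fun t => (u t : ℂ)) y
        - transferZ g σb f z (fun t => (u t : ℂ)) x
        - ((c * transferR g σb u y - transferR g σb u x : ℝ) : ℂ)‖
      ≤ Real.exp (|z.re| * supN f) * ‖z‖
          * ((c * transferR g σb u y - transferR g σb u x) * supN f + transferR g σb u x * ℓ) := by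
  rw [transferZ_ofReal, transferZ_ofReal]
  refine (norm_tsum_mul_sub_tsum_mul_sub_le (β := Real.exp (|z.re| * supN f) * (‖z‖ * ℓ))
    hx hy (fun _ => mul_nonneg (Real.exp_pos _).le (hnn _)) hxy
    (fun j => norm_cexp_mul_sub_one_le hf z (σb j y))
    (fun j => (norm_cexp_mul_sub_cexp_mul_le hf z _ _).trans ?_)).trans_eq ?_
  · gcongr; exact hℓ j
  · unfold transferR; ring

end Transfer

theorem transfer_epsilon_estimate_general
    {J : Type*} [Nonempty J]
    (d : ↥(Set.Icc (0:ℝ) 1) → ↥(Set.Icc (0:ℝ) 1) → ℝ)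
    (hd_eq : ∀ x y, d x y = 0 ↔ x = y)
    (hd_symm : ∀ x y, d x y = d y x)
    (hd_tri : ∀ x y z, d x z ≤ d x y + d y z)
    (σb : J → ↥(Set.Icc (0:ℝ) 1) → ↥(Set.Icc (0:ℝ) 1)) (g : J → ↥(Set.Icc (0:ℝ) 1) → ℝ)
    (γ G : ℝ) (hγ : 1 < γ) (hG : 0 < G)
    (hA1 : ∀ j x y, d (σb j x) (σb j y) ≤ γ⁻¹ * d x y)
    (hA2 : ∀ j x y, |g j x - g j y| ≤ G * d x y)
    (hA3 : ∃ M : ℝ, ∀ x, Summable (fun j => Real.exp (g j x)) ∧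
      (∑' j, Real.exp (g j x)) ≤ M)
    (f : ↥(Set.Icc (0:ℝ) 1) → ℝ)
    (hfLip : ∃ c : ℝ, 0 ≤ c ∧ ∀ x y, |f x - f y| ≤ c * d x y)
    (hfBdd : ∃ M : ℝ, ∀ x, |f x| ≤ M)
    (B : ℝ) (hB : B = (γ * G + 1) / (γ - 1))
    (x y : ↥(Set.Icc (0:ℝ) 1)) (hxy : x ≠ y)
    (u : ↥(Set.Icc (0:ℝ) 1) → ℝ) (hu : u ∈ coneR d B) (hu0 : u ≠ 0) (z : ℂ) :
    0 < Real.exp (B * d x y) * transferR g σb u y - transferR g σb u x ∧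
    ‖(Real.exp (B * d x y) * transferZ g σb f z (fun t => ((u t : ℝ) : ℂ)) y
          - transferZ g σb f z (fun t => ((u t : ℝ) : ℂ)) x) /
        (((Real.exp (B * d x y) * transferR g σb u y - transferR g σb u x : ℝ)) : ℂ) - 1‖
      ≤ Real.exp (|z.re| * supN f) * ‖z‖ * (supN f + lipN d f) := by
  have hd0 := nonneg_of_symm_of_triangle (fun t => (hd_eq t t).2 rfl) hd_symm hd_tri
  have hdxy : 0 < d x y := (hd0 x y).lt_of_ne' (mt (hd_eq x y).1 hxy)
  have hB0 : 0 < B := by rw [hB]; exact div_pos (by nlinarith) (by linarith)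
  have hnn := nonneg_of_mem_coneR hu (hd_symm x y) (mul_pos hB0 hdxy)
  obtain ⟨M, hM⟩ := hA3
  obtain ⟨Mu, hMu⟩ := hu.2.1
  have hsum (p) : Summable fun j => Real.exp (g j p) * u (σb j p) :=
    summable_exp_mul_of_abs_le (hM p).1 hMu
  have hbranch (j) :=
    exp_mul_mul_exp_le_of_mem_coneR hγ hB hB0.le hu hnn (hA1 j x y) (hA2 j x y)
  have hlow := transferR_mul_le_lxy_transferR (hsum x) (hsum y) hnn hbranch
  have hD : 0 < Real.exp (B * d x y) * transferR g σb u y - transferR g σb u x :=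
    lt_of_lt_of_le (mul_pos (transferR_pos (hsum x) (pos_of_mem_coneR hu hnn hu0))
      (by positivity)) hlow
  refine ⟨hD, ?_⟩
  have hℓ (j) : |f (σb j y) - f (σb j x)| ≤ d x y / γ * lipN d f := by
    refine (abs_sub_le_lipN_mul hd0 hfLip _ _).trans ?_
    rw [mul_comm, hd_symm x y, div_eq_inv_mul]
    exact mul_le_mul_of_nonneg_right (hA1 j y x) (lipN_nonneg hfLip)
  have hpert := norm_lxy_transferZ_sub_lxy_transferR_le hfBdd z (hsum x) (hsum y) hnn
    (fun j => (le_mul_of_one_le_right (mul_nonneg (Real.exp_pos _).le (hnn _))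
      (Real.one_le_exp (by positivity))).trans (hbranch j)) hℓ
  rw [div_sub_one (by exact_mod_cast hD.ne'), norm_div, Complex.norm_real,
    Real.norm_of_nonneg hD.le, div_le_iff₀ hD]
  have hlip := lipN_nonneg hfLip
  set A := transferR g σb u x
  set D := Real.exp (B * d x y) * transferR g σb u y - A
  calc _ ≤ Real.exp (|z.re| * supN f) * ‖z‖ * (D * supN f + A * (d x y / γ * lipN d f)) := hpert
    _ ≤ Real.exp (|z.re| * supN f) * ‖z‖ * (D * supN f + D * lipN d f) := by
      rw [← mul_assoc]; gcongr
    _ = Real.exp (|z.re| * supN f) * ‖z‖ * (supN f + lipN d f) * D := by ring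

/-- Lemma 5.2 of the paper: positivity of the functional l_{x,y} applied
to L u, and the epsilon(z) estimate for the perturbed transfer operator. -/
theorem transfer_epsilon_estimate
    {J : Type*} [Countable J] [Nonempty J]
    (d : ↥(Set.Icc (0:ℝ) 1) → ↥(Set.Icc (0:ℝ) 1) → ℝ)
    (hd_eq : ∀ x y, d x y = 0 ↔ x = y)
    (hd_symm : ∀ x y, d x y = d y x)
    (hd_tri : ∀ x y z, d x z ≤ d x y + d y z)
    (hd_le : ∀ x y, d x y ≤ 1)
    (hd_compat : ∀ (x : ↥(Set.Icc (0:ℝ) 1)) (ε : ℝ), 0 < ε →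
      (∃ δ > 0, ∀ y, dist x y < δ → d x y < ε) ∧
      (∃ δ > 0, ∀ y, d x y < δ → dist x y < ε))
    (σb : J → ↥(Set.Icc (0:ℝ) 1) → ↥(Set.Icc (0:ℝ) 1)) (g : J → ↥(Set.Icc (0:ℝ) 1) → ℝ)
    (γ G : ℝ) (hγ : 1 < γ) (hG : 0 < G)
    (hA1 : ∀ j x y, d (σb j x) (σb j y) ≤ γ⁻¹ * d x y)
    (hA2 : ∀ j x y, |g j x - g j y| ≤ G * d x y)
    (hA3 : ∃ M : ℝ, ∀ x, Summable (fun j => Real.exp (g j x)) ∧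
      (∑' j, Real.exp (g j x)) ≤ M)
    (f : ↥(Set.Icc (0:ℝ) 1) → ℝ)
    (hfLip : ∃ c : ℝ, 0 ≤ c ∧ ∀ x y, |f x - f y| ≤ c * d x y)
    (hfBdd : ∃ M : ℝ, ∀ x, |f x| ≤ M)
    (B : ℝ) (hB : B = (γ * G + 1) / (γ - 1))
    (x y : ↥(Set.Icc (0:ℝ) 1)) (hxy : x ≠ y)
    (u : ↥(Set.Icc (0:ℝ) 1) → ℝ) (hu : u ∈ coneR d B) (hu0 : u ≠ 0) (z : ℂ) :
    0 < Real.exp (B * d x y) * transferR g σb u y - transferR g σb u x ∧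
    ‖(Real.exp (B * d x y) * transferZ g σb f z (fun t => ((u t : ℝ) : ℂ)) y
          - transferZ g σb f z (fun t => ((u t : ℝ) : ℂ)) x) /
        (((Real.exp (B * d x y) * transferR g σb u y - transferR g σb u x : ℝ)) : ℂ) - 1‖
      ≤ Real.exp (|z.re| * supN f) * ‖z‖ * (supN f + lipN d f) :=
  transfer_epsilon_estimate_general d hd_eq hd_symm hd_tri σb g γ G hγ hG hA1 hA2 hA3 f hfLip hfBdd
    B hB x y hxy u hu hu0 z
end

section
/- Let δ₀ > 0, Δ > 0, and let φ be a holomorphic function on the open disk {z ∈ ℂ : |z| < δ₀} with values in the annulus {ζ ∈ ℂ : e^{−Δ} < |ζ| < e^{Δ}}, such that φ(0) = 1 and φ'(0) = 0. Let 0 < α < 1 and set C(α) = (2/π)·log((1+α)/(1−α)). Then for every z ∈ ℂ with |z| ≤ α·δ₀, |φ(z) − 1| ≤ ((exp(C(α)·Δ) − 1)/(α²·δ₀²))·|z|². -/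
/-!
Since `φ` has no zeros, `φ = exp ψ` with `ψ 0 = ψ' 0 = 0` and `ψ` valued in the strip
`|re w| < Δ`. The map `w ↦ tan (π w / (4 Δ))` sends this strip into the unit disc, and the
power series of `arctan` gives `‖arctan u‖ ≤ artanh ‖u‖`; so the Schwarz lemma bounds `‖ψ‖` by
`M = 4 Δ / π * artanh α = C(α) Δ` on the disc of radius `α δ₀`. The Schwarz lemma for maps
vanishing to second order then gives `‖ψ z‖ ≤ M (‖z‖ / (α δ₀))²`, and convexity of `exp` turns
this into the bound on `‖exp ψ - 1‖`; the boundary circle follows by continuity.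
-/

open Complex Metric Set
open scoped Real

theorem Complex.norm_exp_sub_one_le_of_norm_le_mul {w : ℂ} {t M : ℝ} (ht₀ : 0 ≤ t)
    (ht₁ : t ≤ 1) (hw : ‖w‖ ≤ t * M) : ‖exp w - 1‖ ≤ t * (Real.exp M - 1) := by
  have hconv : Real.exp (t * M) ≤ (1 - t) + t * Real.exp M := by
    simpa using convexOn_exp.2 (mem_univ 0) (mem_univ M) (by linarith : 0 ≤ 1 - t) ht₀
      (by ring)
  calc ‖exp w - 1‖ ≤ Real.exp ‖w‖ - 1 := by
        simpa using norm_exp_sub_sum_le_exp_norm_sub_sum w 1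
    _ ≤ Real.exp (t * M) - 1 := by gcongr
    _ ≤ t * (Real.exp M - 1) := by linarith

theorem Complex.norm_arctan_le_artanh_norm {u : ℂ} (hu : ‖u‖ < 1) :
    ‖arctan u‖ ≤ Real.artanh ‖u‖ := by
  have hlog := Real.hasSum_log_sub_log_of_abs_lt_one (x := ‖u‖) (by rwa [abs_norm])
  rw [Real.artanh_eq_half_log ⟨by linarith [norm_nonneg u], hu.le⟩,
    Real.log_div (by linarith [norm_nonneg u]) (by linarith)]
  refine (hasSum_arctan hu).norm_le_of_bounded (hlog.mul_left (1 / 2)) fun n ↦ le_of_eq ?_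
  rw [norm_div, norm_mul, Complex.norm_natCast]
  simp only [norm_pow, norm_neg, norm_one, one_pow, one_mul]
  push_cast
  field_simp

theorem Complex.norm_sin_lt_norm_cos {z : ℂ} (hz : |z.re| < π / 4) : ‖sin z‖ < ‖cos z‖ := by
  have hcos2 : 0 < Real.cos z.re ^ 2 - Real.sin z.re ^ 2 := by
    rw [← Real.cos_two_mul']
    apply Real.cos_pos_of_mem_Ioo
    constructor <;> linarith [abs_lt.1 hz]
  have hsin : sin z =
      ↑(Real.sin z.re * Real.cosh z.im) + ↑(Real.cos z.re * Real.sinh z.im) * I := by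
    rw [sin_eq]; push_cast; ring
  have hcos : cos z =
      ↑(Real.cos z.re * Real.cosh z.im) + ↑(-Real.sin z.re * Real.sinh z.im) * I := by
    rw [cos_eq]; push_cast; ring
  have hsq : normSq (sin z) < normSq (cos z) := by
    rw [hsin, hcos, normSq_add_mul_I, normSq_add_mul_I]
    nlinarith [Real.cosh_sq_sub_sinh_sq z.im]
  rwa [normSq_eq_norm_sq, normSq_eq_norm_sq, sq_lt_sq₀ (norm_nonneg _) (norm_nonneg _)] at hsq

theorem Complex.norm_tan_lt_one {z : ℂ} (hz : |z.re| < π / 4) : ‖tan z‖ < 1 := by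
  have h := norm_sin_lt_norm_cos hz
  rw [tan_eq_sin_div_cos, norm_div, div_lt_one ((norm_nonneg _).trans_lt h)]
  exact h

theorem Complex.norm_le_artanh_norm_tan {z : ℂ} (hz : |z.re| < π / 4) :
    ‖z‖ ≤ Real.artanh ‖tan z‖ := by
  have hre := abs_lt.1 hz
  have hz' : z ≠ π / 2 := by
    rintro rfl
    rw [div_ofNat_re, ofReal_re] at hre
    linarith [hre.2, Real.pi_pos]
  calc ‖z‖ = ‖arctan (tan z)‖ := by
        rw [arctan_tan hz' (by linarith [Real.pi_pos]) (by linarith [Real.pi_pos])]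
    _ ≤ Real.artanh ‖tan z‖ := norm_arctan_le_artanh_norm (norm_tan_lt_one hz)

theorem exists_hasDerivAt_and_exp_eq_of_ne_zero {f : ℂ → ℂ} {c : ℂ} {r : ℝ}
    (hf : DifferentiableOn ℂ f (ball c r)) (hne : ∀ z ∈ ball c r, f z ≠ 0) {w : ℂ}
    (hw : exp w = f c) :
    ∃ g : ℂ → ℂ, g c = w ∧ (∀ z ∈ ball c r, HasDerivAt g (deriv f z / f z) z) ∧
      ∀ z ∈ ball c r, exp (g z) = f z := by
  have hlogDeriv : DifferentiableOn ℂ (fun z ↦ deriv f z / f z) (ball c r) :=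
    ((hf.analyticOnNhd isOpen_ball).deriv.differentiableOn).div hf hne
  obtain ⟨g, hgc, hg⟩ := hlogDeriv.isExactOn_ball.with_val_at c w
  refine ⟨g, hgc, hg, fun z hz ↦ ?_⟩
  have hderiv_zero : ∀ x ∈ ball c r, HasDerivAt (fun x ↦ exp (-g x) * f x) 0 x := by
    intro x hx
    have hfx := (hf.differentiableAt (isOpen_ball.mem_nhds hx)).hasDerivAt
    refine (((hg x hx).neg.cexp).mul hfx).congr_deriv ?_
    field_simp [hne x hx]
    ring
  have hconst := isOpen_ball.is_const_of_deriv_eq_zero (convex_ball c r).isPreconnected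
    (fun x hx ↦ (hderiv_zero x hx).differentiableAt.differentiableWithinAt)
    (fun x hx ↦ (hderiv_zero x hx).deriv) hz (mem_ball_self (pos_of_mem_ball hz))
  simp only [hgc, ← hw, exp_neg] at hconst
  field_simp [exp_ne_zero] at hconst
  exact hconst.symm

theorem dist_le_mul_div_sq_of_mapsTo_ball {F : Type*} [NormedAddCommGroup F] [NormedSpace ℂ F]
    {f : ℂ → F} {c z : ℂ} {R M : ℝ}
    (hd : DifferentiableOn ℂ f (ball c R)) (hmaps : MapsTo f (ball c R) (closedBall (f c) M))
    (hf' : HasDerivAt f 0 c) (hz : z ∈ ball c R) :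
    dist (f z) (f c) ≤ M * (dist z c / R) ^ 2 := by
  refine dist_le_mul_div_pow_of_mapsTo_ball_of_isLittleO (n := 1) hd hmaps ?_ hz
  simpa using (hasDerivAt_iff_isLittleO.1 hf').norm_right

theorem norm_le_mul_artanh_of_abs_re_lt {f : ℂ → ℂ} {R Δ : ℝ} (hΔ : 0 < Δ)
    (hd : DifferentiableOn ℂ f (ball 0 R)) (h0 : f 0 = 0)
    (hre : ∀ z ∈ ball 0 R, |(f z).re| < Δ) {z : ℂ} (hz : z ∈ ball 0 R) :
    ‖f z‖ ≤ 4 * Δ / π * Real.artanh (‖z‖ / R) := by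
  have hR : 0 < R := pos_of_mem_ball hz
  set k : ℝ := π / (4 * Δ) with hk
  have hk0 : 0 < k := by positivity
  -- `k` rescales the strip `|re w| < Δ` to `|re w| < π / 4`, which `tan` maps into the unit disc
  have hstrip : ∀ x ∈ ball 0 R, |((k : ℂ) * f x).re| < π / 4 := by
    intro x hx
    rw [re_ofReal_mul, abs_mul, abs_of_pos hk0, hk]
    calc π / (4 * Δ) * |(f x).re| < π / (4 * Δ) * Δ := by gcongr; exact hre x hx
      _ = π / 4 := by field_simp
  set g : ℂ → ℂ := fun x ↦ tan (k * f x)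
  have hgd : DifferentiableOn ℂ g (ball 0 R) := fun x hx ↦
    have hcos : cos (k * f x) ≠ 0 :=
      norm_pos_iff.1 ((norm_nonneg _).trans_lt (norm_sin_lt_norm_cos (hstrip x hx)))
    (differentiableAt_tan.2 hcos).comp_differentiableWithinAt (g := tan) x
      ((hd x hx).const_mul (k : ℂ))
  have hg0 : g 0 = 0 := by simp [g, h0]
  have hmaps : MapsTo g (ball 0 R) (closedBall (g 0) 1) := fun x hx ↦ by
    rw [hg0, mem_closedBall_zero_iff]
    exact (norm_tan_lt_one (hstrip x hx)).le
  have hschwarz := dist_le_div_mul_dist_of_mapsTo_ball hgd hmaps hz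
  rw [hg0, dist_zero_right, dist_zero_right] at hschwarz
  have hzR : ‖z‖ / R < 1 := (div_lt_one hR).2 (mem_ball_zero_iff.1 hz)
  have hkf : k * ‖f z‖ ≤ Real.artanh (‖z‖ / R) :=
    calc k * ‖f z‖ = ‖(k : ℂ) * f z‖ := by rw [norm_mul, norm_real, Real.norm_of_nonneg hk0.le]
      _ ≤ Real.artanh ‖g z‖ := norm_le_artanh_norm_tan (hstrip z hz)
      _ ≤ Real.artanh (‖z‖ / R) := Real.artanh_le_artanh (by linarith [norm_nonneg (g z)]) hzR
          (by rw [div_eq_inv_mul, ← one_div]; exact hschwarz)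
  calc ‖f z‖ = k⁻¹ * (k * ‖f z‖) := by field_simp
    _ ≤ k⁻¹ * Real.artanh (‖z‖ / R) := by gcongr
    _ = 4 * Δ / π * Real.artanh (‖z‖ / R) := by rw [hk, inv_div]

theorem norm_exp_sub_one_le_of_abs_re_lt {ψ : ℂ → ℂ} {R Δ α : ℝ} (hΔ : 0 < Δ) (hα₀ : 0 < α)
    (hα₁ : α < 1) (hd : DifferentiableOn ℂ ψ (ball 0 R)) (h0 : ψ 0 = 0)
    (h0' : HasDerivAt ψ 0 0) (hre : ∀ z ∈ ball 0 R, |(ψ z).re| < Δ) {z : ℂ}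
    (hz : z ∈ ball 0 (α * R)) :
    ‖exp (ψ z) - 1‖ ≤ (‖z‖ / (α * R)) ^ 2 * (Real.exp (4 * Δ / π * Real.artanh α) - 1) := by
  have hαR : 0 < α * R := pos_of_mem_ball hz
  have hR : 0 < R := pos_of_mul_pos_right hαR hα₀.le
  have hsub : ball (0 : ℂ) (α * R) ⊆ ball 0 R := ball_subset_ball (by nlinarith)
  have hmaps : MapsTo ψ (ball 0 (α * R)) (closedBall (ψ 0) (4 * Δ / π * Real.artanh α)) := by
    intro x hx
    rw [h0, mem_closedBall_zero_iff]
    refine (norm_le_mul_artanh_of_abs_re_lt hΔ hd h0 hre (hsub hx)).trans ?_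
    gcongr
    refine Real.artanh_le_artanh (neg_one_lt_zero.trans_le (by positivity)) hα₁ ?_
    rw [div_le_iff₀ hR]
    exact (mem_ball_zero_iff.1 hx).le
  have hquad := dist_le_mul_div_sq_of_mapsTo_ball (hd.mono hsub) hmaps h0' hz
  rw [h0, dist_zero_right, dist_zero_right] at hquad
  have ht : (‖z‖ / (α * R)) ^ 2 ≤ 1 := by
    rw [sq_le_one_iff₀ (by positivity), div_le_one hαR]
    exact (mem_ball_zero_iff.1 hz).le
  exact norm_exp_sub_one_le_of_norm_le_mul (by positivity) ht (by linarith)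

theorem norm_sub_one_le_of_forall_mem_annulus {φ : ℂ → ℂ} {R Δ α : ℝ} (hΔ : 0 < Δ)
    (hα₀ : 0 < α) (hα₁ : α < 1) (hd : DifferentiableOn ℂ φ (ball 0 R))
    (hann : ∀ z ∈ ball 0 R, Real.exp (-Δ) < ‖φ z‖ ∧ ‖φ z‖ < Real.exp Δ)
    (h0 : φ 0 = 1) (h1 : deriv φ 0 = 0) {z : ℂ} (hz : z ∈ ball 0 (α * R)) :
    ‖φ z - 1‖ ≤ (‖z‖ / (α * R)) ^ 2 * (Real.exp (4 * Δ / π * Real.artanh α) - 1) := by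
  have hR : 0 < R := pos_of_mul_pos_right (pos_of_mem_ball hz) hα₀.le
  have hne : ∀ x ∈ ball (0 : ℂ) R, φ x ≠ 0 := fun x hx hφx ↦ by
    simpa [hφx, (Real.exp_pos _).not_gt] using (hann x hx).1
  obtain ⟨ψ, hψ0, hψ', hexp⟩ := exists_hasDerivAt_and_exp_eq_of_ne_zero hd hne (w := 0)
    (by rw [exp_zero, h0])
  have hψd : DifferentiableOn ℂ ψ (ball 0 R) := fun x hx ↦
    (hψ' x hx).differentiableAt.differentiableWithinAt
  have hre : ∀ x ∈ ball (0 : ℂ) R, |(ψ x).re| < Δ := fun x hx ↦ by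
    have hx' := hann x hx
    rw [← hexp x hx, norm_exp, Real.exp_lt_exp, Real.exp_lt_exp] at hx'
    exact abs_lt.2 hx'
  have hψ'0 : HasDerivAt ψ 0 0 := by simpa [h0, h1] using hψ' 0 (mem_ball_self hR)
  have hzR : z ∈ ball (0 : ℂ) R := ball_subset_ball (by nlinarith) hz
  rw [← hexp z hzR]
  exact norm_exp_sub_one_le_of_abs_re_lt hΔ hα₀ hα₁ hψd hψ0 hψ'0 hre hz

/-- Lemma 6.4: a holomorphic function from a disk to an annulus
A(Δ) = {e^{-Δ} < |ζ| < e^{Δ}} with φ(0) = 1 and φ'(0) = 0 satisfies an explicit quadratic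
estimate |φ(z) − 1| ≤ ((e^{C(α)Δ} − 1)/(α²δ₀²))·|z|² on the smaller disk |z| ≤ αδ₀. -/
theorem annulus_valued_holomorphic_estimate
    (δ₀ Δ : ℝ) (hδ₀ : 0 < δ₀) (hΔ : 0 < Δ) (φ : ℂ → ℂ)
    (hφ : ∀ z ∈ Metric.ball (0 : ℂ) δ₀, DifferentiableAt ℂ φ z)
    (hann : ∀ z ∈ Metric.ball (0 : ℂ) δ₀,
      Real.exp (-Δ) < ‖φ z‖ ∧ ‖φ z‖ < Real.exp Δ)
    (h0 : φ 0 = 1) (h1 : deriv φ 0 = 0)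
    (α : ℝ) (hα0 : 0 < α) (hα1 : α < 1) :
    ∀ z : ℂ, ‖z‖ ≤ α * δ₀ →
      ‖φ z - 1‖ ≤
        ((Real.exp (((2 / Real.pi) * Real.log ((1 + α) / (1 - α))) * Δ) - 1)
            / (α ^ 2 * δ₀ ^ 2)) * ‖z‖ ^ 2 := by
  intro z hz
  have hM : 2 / π * Real.log ((1 + α) / (1 - α)) * Δ = 4 * Δ / π * Real.artanh α := by
    rw [Real.artanh_eq_half_log ⟨by linarith, hα1.le⟩]; ring
  have hzδ₀ : z ∈ ball (0 : ℂ) δ₀ := mem_ball_zero_iff.2 (hz.trans_lt (by nlinarith))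
  have hz_closure : z ∈ closure (ball (0 : ℂ) (α * δ₀)) := by
    rwa [closure_ball _ (by positivity), mem_closedBall_zero_iff]
  refine ContinuousWithinAt.closure_le (f := fun y ↦ ‖φ y - 1‖) (g := fun y ↦ _ * ‖y‖ ^ 2)
    hz_closure ((hφ z hzδ₀).continuousAt.sub continuousAt_const).norm.continuousWithinAt
    (continuous_const.mul (continuous_norm.pow 2)).continuousWithinAt fun y hy ↦ ?_
  rw [hM]
  calc ‖φ y - 1‖ ≤ (‖y‖ / (α * δ₀)) ^ 2 * (Real.exp (4 * Δ / π * Real.artanh α) - 1) :=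
        norm_sub_one_le_of_forall_mem_annulus hΔ hα0 hα1
          (fun x hx ↦ (hφ x hx).differentiableWithinAt) hann h0 h1 hy
    _ = _ := by field_simp
end

section
/- For every real x with 0 < x < π/2 and every y ∈ ℝ, cos(x)·cosh(√(x² + y²)) ≤ cosh(y). Equivalently, cos(x)·cosh(|x + i·y|) ≤ cosh(y), where |x + i·y| is the modulus of the complex number x + i·y. -/
/-!
Write `x² + y² = ((x + y)² + (x - y)²) / 2`. Since `sinh u / u` increases on `u > 0`, the
function `t ↦ cosh √t` is convex on `[0, ∞)`, and midpoint convexity gives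
`cosh √(x² + y²) ≤ (cosh (x + y) + cosh (x - y)) / 2 = cosh x * cosh y`.
It remains that `cos x * cosh x ≤ 1` on `[0, π/2]`: this product decreases there because
`tanh x ≤ x ≤ tan x`.
-/

open Real Set

namespace Real

lemma convexOn_sinh_Ici : ConvexOn ℝ (Ici 0) sinh :=
  MonotoneOn.convexOn_of_deriv (convex_Ici 0) continuous_sinh.continuousOn
    differentiable_sinh.differentiableOn
    (by rw [deriv_sinh]; exact cosh_strictMonoOn.monotoneOn.mono interior_subset)

lemma sinh_le_mul_cosh {u : ℝ} (hu : 0 ≤ u) : sinh u ≤ u * cosh u := by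
  rcases hu.eq_or_lt with rfl | hu
  · simp
  have h := convexOn_sinh_Ici.slope_le_of_hasDerivAt self_mem_Ici hu.le hu (hasDerivAt_sinh u)
  rwa [slope_def_field, sinh_zero, sub_zero, sub_zero, div_le_iff₀ hu, mul_comm] at h

lemma monotoneOn_sinh_div_self : MonotoneOn (fun u ↦ sinh u / u) (Ioi 0) := by
  have h := (convexOn_sinh_Ici.monotoneOn_slope_gt self_mem_Ici).mono
    fun u (hu : u ∈ Ioi 0) ↦ ⟨le_of_lt hu, hu⟩
  simpa [slope_fun_def_field] using h

lemma convexOn_cosh_sqrt : ConvexOn ℝ (Ici 0) (fun t ↦ cosh √t) := by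
  have hderiv (t : ℝ) (ht : 0 < t) :
      HasDerivAt (fun t ↦ cosh √t) (sinh √t / √t / 2) t :=
    ((hasDerivAt_cosh √t).comp t (hasDerivAt_sqrt ht.ne')).congr_deriv (by ring)
  refine MonotoneOn.convexOn_of_deriv (convex_Ici 0) (by fun_prop) ?_ ?_ <;> rw [interior_Ici]
  · exact fun t ht ↦ (hderiv t ht).differentiableAt.differentiableWithinAt
  · intro a ha b hb hab
    rw [(hderiv a ha).deriv, (hderiv b hb).deriv]
    exact div_le_div_of_nonneg_right
      (monotoneOn_sinh_div_self (sqrt_pos.2 ha) (sqrt_pos.2 hb) (sqrt_le_sqrt hab)) zero_le_two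

lemma cosh_sqrt_sq_add_sq_le (a b : ℝ) : cosh √(a ^ 2 + b ^ 2) ≤ cosh a * cosh b := by
  have h := convexOn_cosh_sqrt.2 (sq_nonneg (a + b)) (sq_nonneg (a - b))
    (by norm_num : (0 : ℝ) ≤ 1 / 2) (by norm_num : (0 : ℝ) ≤ 1 / 2) (by norm_num)
  simp only [smul_eq_mul, sqrt_sq_eq_abs, cosh_abs, cosh_add, cosh_sub] at h
  calc cosh √(a ^ 2 + b ^ 2) = cosh √(1 / 2 * (a + b) ^ 2 + 1 / 2 * (a - b) ^ 2) := by ring_nf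
    _ ≤ _ := h
    _ = cosh a * cosh b := by ring

lemma antitoneOn_cos_mul_cosh : AntitoneOn (fun x ↦ cos x * cosh x) (Icc 0 (π / 2)) := by
  refine antitoneOn_of_deriv_nonpos (convex_Icc _ _) (by fun_prop) (by fun_prop) fun t ht ↦ ?_
  rw [interior_Icc] at ht
  have hcos : 0 < cos t := cos_pos_of_mem_Ioo ⟨by linarith [pi_pos, ht.1], ht.2⟩
  have hsin : t * cos t ≤ sin t := by
    simpa [tan_eq_sin_div_cos, le_div_iff₀ hcos] using le_tan ht.1.le ht.2
  have h : cos t * sinh t ≤ sin t * cosh t :=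
    calc cos t * sinh t ≤ cos t * (t * cosh t) := by gcongr; exact sinh_le_mul_cosh ht.1.le
      _ = t * cos t * cosh t := by ring
      _ ≤ sin t * cosh t := by gcongr
  rw [deriv_fun_mul (by fun_prop) (by fun_prop), deriv_cos, deriv_cosh]
  linarith

lemma cos_mul_cosh_le_one {x : ℝ} (hx : |x| ≤ π / 2) : cos x * cosh x ≤ 1 := by
  rw [← cos_abs, ← cosh_abs]
  simpa using
    antitoneOn_cos_mul_cosh ⟨le_rfl, by positivity⟩ ⟨abs_nonneg x, hx⟩ (abs_nonneg x)

end Real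

/-- for 0 < x < π/2 and y real,
cos(x)·cosh(√(x²+y²)) ≤ cosh(y); equivalently cos(x)·cosh(|x+iy|) ≤ cosh(y). -/
theorem cos_mul_cosh_norm_le_cosh
    (x y : ℝ) (hx0 : 0 < x) (hx : x < Real.pi / 2) :
    Real.cos x * Real.cosh (Real.sqrt (x ^ 2 + y ^ 2)) ≤ Real.cosh y ∧
    Real.cos x * Real.cosh (‖(x : ℂ) + (y : ℂ) * Complex.I‖) ≤ Real.cosh y := by
  have hcos : 0 ≤ cos x := cos_nonneg_of_mem_Icc ⟨by linarith [pi_pos], hx.le⟩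
  have hcos_cosh : cos x * cosh x ≤ 1 := cos_mul_cosh_le_one ((abs_of_pos hx0).trans_le hx.le)
  have key : cos x * cosh √(x ^ 2 + y ^ 2) ≤ cosh y :=
    calc cos x * cosh √(x ^ 2 + y ^ 2) ≤ cos x * cosh x * cosh y := by
          rw [mul_assoc]; gcongr; exact cosh_sqrt_sq_add_sq_le x y
      _ ≤ cosh y := mul_le_of_le_one_left (cosh_pos y).le hcos_cosh
  exact ⟨key, by rwa [Complex.norm_add_mul_I]⟩
end

section
/- Let (X,d) be a metric space with d(x,y) ≤ 1 for all x,y, let B > 0, set C₁ = max(1, B·e^B), and for x,y ∈ X and a bounded complex Lipschitz function h on X write ⟨l_{x,y}, h⟩ = e^{B·d(x,y)}·h(y) − h(x) and ‖h‖_Lip = ‖h‖∞ + |h|_ℓ. Then: (i) for all x, y ∈ X, |⟨l_{x,y}, h⟩| ≤ C₁·‖h‖_Lip·d(x,y); and (ii) for all x, y, x', y' ∈ X, Re( conj(⟨l_{x,y}, 1 + h⟩)·⟨l_{x',y'}, 1 + h⟩ ) ≥ (B² − 2·C₁²·‖h‖_Lip − C₁²·‖h‖_Lip²)·d(x,y)·d(x',y'),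 where 1 denotes the constant function 1. -/
open Complex

/-!
Write `⟨l_{x,y}, h⟩ = (e^{B d(x,y)} - 1) h(y) + (h(y) - h(x))`. Since `d ≤ 1`, the factor
`e^{B d} - 1` lies between `B d` and `B e^B d ≤ C₁ d`, and the second term is at most `|h|_ℓ d`;
this gives (i). For (ii), `⟨l_{x,y}, 1 + h⟩ = (e^{B d(x,y)} - 1) + ⟨l_{x,y}, h⟩` is a positive real
of size at least `B d(x,y)` perturbed by a complex number of size at most `C₁ ‖h‖_Lip d(x,y)`;
expanding the real part of the product, the three cross terms are bounded using (i).
-/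

open ComplexConjugate

section Norms

variable {X : Type*}

lemma supNC_nonneg (u : X → ℂ) : 0 ≤ supNC u :=
  Real.sSup_nonneg (by rintro _ ⟨x, rfl⟩; exact norm_nonneg _)

lemma norm_le_supNC {u : X → ℂ} (hu : ∃ M, ∀ x, ‖u x‖ ≤ M) (x : X) : ‖u x‖ ≤ supNC u := by
  obtain ⟨M, hM⟩ := hu
  exact le_csSup ⟨M, by rintro _ ⟨z, rfl⟩; exact hM z⟩ ⟨x, rfl⟩

lemma lipNC_nonneg (d : X → X → ℝ) (u : X → ℂ) : 0 ≤ lipNC d u :=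
  Real.sInf_nonneg fun _ hc => hc.1

lemma norm_sub_le_lipNC_mul {d : X → X → ℝ} {u : X → ℂ} (hd : ∀ x y, 0 ≤ d x y)
    (hu : ∃ c, 0 ≤ c ∧ ∀ x y, ‖u x - u y‖ ≤ c * d x y) (x y : X) :
    ‖u x - u y‖ ≤ lipNC d u * d x y := by
  rcases (hd x y).eq_or_lt with hzero | hpos
  · obtain ⟨c, -, hc⟩ := hu
    simpa [← hzero] using hc x y
  · rw [← div_le_iff₀ hpos]
    exact le_csInf hu fun c hc => (div_le_iff₀ hpos).2 (hc.2 x y)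

lemma nonneg_of_triangle {d : X → X → ℝ} (hdiag : ∀ x, d x x = 0)
    (hsymm : ∀ x y, d x y = d y x) (htri : ∀ x y z, d x z ≤ d x y + d y z) (x y : X) :
    0 ≤ d x y := by
  linarith [htri x y x, hdiag x, hsymm y x]

end Norms

lemma Real.exp_sub_one_le_mul_exp (t : ℝ) : Real.exp t - 1 ≤ t * Real.exp t := by
  have h := mul_le_mul_of_nonneg_left (Real.one_sub_le_exp_neg t) (Real.exp_pos t).le
  rw [← Real.exp_add, add_neg_cancel, Real.exp_zero] at h
  linarith

lemma exp_mul_sub_one_le {B C s : ℝ} (hB : 0 ≤ B) (hC : B * Real.exp B ≤ C) (hs₀ : 0 ≤ s)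
    (hs₁ : s ≤ 1) : Real.exp (B * s) - 1 ≤ C * s :=
  calc Real.exp (B * s) - 1 ≤ B * s * Real.exp (B * s) := Real.exp_sub_one_le_mul_exp _
    _ ≤ B * s * Real.exp B := by gcongr; nlinarith
    _ = B * Real.exp B * s := by ring
    _ ≤ C * s := by gcongr

lemma le_re_conj_ofReal_add_mul_ofReal_add {a a' : ℝ} (ha : 0 ≤ a) (ha' : 0 ≤ a') (z z' : ℂ) :
    a * a' - a * ‖z'‖ - a' * ‖z‖ - ‖z‖ * ‖z'‖ ≤ (conj ((a : ℂ) + z) * ((a' : ℂ) + z')).re := by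
  have hre : (conj ((a : ℂ) + z) * ((a' : ℂ) + z')).re
      = a * a' + a * z'.re + a' * z.re + (conj z * z').re := by
    simp only [map_add, conj_ofReal, mul_re, add_re, add_im, ofReal_re, ofReal_im, conj_re,
      conj_im]
    ring
  have hzz' : -(‖z‖ * ‖z'‖) ≤ (conj z * z').re := by
    simpa [norm_mul] using neg_le_of_abs_le (abs_re_le_norm (conj z * z'))
  have hz : -‖z‖ ≤ z.re := neg_le_of_abs_le (abs_re_le_norm z)
  have hz' : -‖z'‖ ≤ z'.re := neg_le_of_abs_le (abs_re_le_norm z')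
  rw [hre]
  nlinarith [mul_le_mul_of_nonneg_left hz ha', mul_le_mul_of_nonneg_left hz' ha]

/-- The pairing `⟨l_{x,y}, h⟩` of the paper. -/
noncomputable def lxy {X : Type*} (d : X → X → ℝ) (B : ℝ) (x y : X) (h : X → ℂ) : ℂ :=
  (Real.exp (B * d x y) : ℂ) * h y - h x

lemma lxy_one_add {X : Type*} (d : X → X → ℝ) (B : ℝ) (x y : X) (h : X → ℂ) :
    lxy d B x y (1 + h) = ((Real.exp (B * d x y) - 1 : ℝ) : ℂ) + lxy d B x y h := by
  simp only [lxy, Pi.add_apply, Pi.one_apply]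
  push_cast
  ring

section Estimates

variable {X : Type*} {d : X → X → ℝ} {B C : ℝ} {h : X → ℂ}
  (hd₀ : ∀ x y, 0 ≤ d x y) (hd₁ : ∀ x y, d x y ≤ 1) (hB : 0 ≤ B) (hC₁ : 1 ≤ C)
  (hCB : B * Real.exp B ≤ C) (hLip : ∃ c, 0 ≤ c ∧ ∀ x y, ‖h x - h y‖ ≤ c * d x y)
  (hBdd : ∃ M, ∀ x, ‖h x‖ ≤ M)
include hd₀ hd₁ hB hC₁ hCB hLip hBdd

theorem norm_lxy_le (x y : X) : ‖lxy d B x y h‖ ≤ C * (supNC h + lipNC d h) * d x y := by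
  have hexp : 0 ≤ Real.exp (B * d x y) - 1 := by
    linarith [Real.one_le_exp (mul_nonneg hB (hd₀ x y))]
  have hsplit : lxy d B x y h = ((Real.exp (B * d x y) - 1 : ℝ) : ℂ) * h y + (h y - h x) := by
    simp only [lxy]; push_cast; ring
  calc ‖lxy d B x y h‖
      ≤ (Real.exp (B * d x y) - 1) * ‖h y‖ + ‖h y - h x‖ := by
        rw [hsplit]
        refine (norm_add_le _ _).trans_eq ?_
        rw [norm_mul, norm_real, Real.norm_of_nonneg hexp]
    _ ≤ C * d x y * supNC h + C * (lipNC d h * d x y) := by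
        have hfac := exp_mul_sub_one_le hB hCB (hd₀ x y) (hd₁ x y)
        have hsup := norm_le_supNC hBdd y
        have hlip : ‖h y - h x‖ ≤ C * (lipNC d h * d x y) := by
          rw [norm_sub_rev]
          exact (norm_sub_le_lipNC_mul hd₀ hLip x y).trans
            (le_mul_of_one_le_left (mul_nonneg (lipNC_nonneg d h) (hd₀ x y)) hC₁)
        gcongr
        exact mul_nonneg (by linarith) (hd₀ x y)
    _ = C * (supNC h + lipNC d h) * d x y := by ring

theorem le_re_conj_lxy_one_add_mul (x y x' y' : X) :
    (B ^ 2 - 2 * C ^ 2 * (supNC h + lipNC d h) - C ^ 2 * (supNC h + lipNC d h) ^ 2) *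
        (d x y * d x' y') ≤
      (conj (lxy d B x y (1 + h)) * lxy d B x' y' (1 + h)).re := by
  set K := supNC h + lipNC d h
  have hK : 0 ≤ K := add_nonneg (supNC_nonneg h) (lipNC_nonneg d h)
  have hs := hd₀ x y
  have hs' := hd₀ x' y'
  have hlow := Real.add_one_le_exp (B * d x y)
  have hlow' := Real.add_one_le_exp (B * d x' y')
  have hup := exp_mul_sub_one_le hB hCB hs (hd₁ x y)
  have hup' := exp_mul_sub_one_le hB hCB hs' (hd₁ x' y')
  have hz := norm_lxy_le hd₀ hd₁ hB hC₁ hCB hLip hBdd x y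
  have hz' := norm_lxy_le hd₀ hd₁ hB hC₁ hCB hLip hBdd x' y'
  have hBs : 0 ≤ B * d x y := mul_nonneg hB hs
  have hBs' : 0 ≤ B * d x' y' := mul_nonneg hB hs'
  rw [lxy_one_add, lxy_one_add]
  refine le_trans ?_ (le_re_conj_ofReal_add_mul_ofReal_add (by linarith) (by linarith) _ _)
  calc (B ^ 2 - 2 * C ^ 2 * K - C ^ 2 * K ^ 2) * (d x y * d x' y')
      = B * d x y * (B * d x' y') - C * d x y * (C * K * d x' y')
          - C * d x' y' * (C * K * d x y) - C * K * d x y * (C * K * d x' y') := by ring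
    _ ≤ _ := by gcongr <;> linarith

end Estimates

theorem lxy_estimates_and_one_interior_general
    {X : Type*} (d : X → X → ℝ)
    (hd_eq : ∀ x y, d x y = 0 ↔ x = y)
    (hd_symm : ∀ x y, d x y = d y x)
    (hd_tri : ∀ x y z, d x z ≤ d x y + d y z)
    (hd_le : ∀ x y, d x y ≤ 1)
    (B : ℝ) (hB : 0 < B)
    (C₁ : ℝ) (hC₁ : C₁ = max 1 (B * Real.exp B))
    (h : X → ℂ)
    (hhLip : ∃ c : ℝ, 0 ≤ c ∧ ∀ x y, ‖h x - h y‖ ≤ c * d x y)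
    (hhBdd : ∃ M : ℝ, ∀ x, ‖h x‖ ≤ M) :
    (∀ x y : X,
      ‖((Real.exp (B * d x y) : ℝ) : ℂ) * h y - h x‖ ≤
        C₁ * (supNC h + lipNC d h) * d x y) ∧
    ∀ x y x' y' : X,
      (B ^ 2 - 2 * C₁ ^ 2 * (supNC h + lipNC d h) - C₁ ^ 2 * (supNC h + lipNC d h) ^ 2) *
          (d x y * d x' y') ≤
        ((starRingEnd ℂ)
            (((Real.exp (B * d x y) : ℝ) : ℂ) * (1 + h y) - (1 + h x)) *
          (((Real.exp (B * d x' y') : ℝ) : ℂ) * (1 + h y') - (1 + h x'))).re := by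
  have hd₀ := nonneg_of_triangle (fun x => (hd_eq x x).2 rfl) hd_symm hd_tri
  have hC1 : 1 ≤ C₁ := hC₁ ▸ le_max_left _ _
  have hCB : B * Real.exp B ≤ C₁ := hC₁ ▸ le_max_right _ _
  exact ⟨norm_lxy_le hd₀ hd_le hB.le hC1 hCB hhLip hhBdd,
    le_re_conj_lxy_one_add_mul hd₀ hd_le hB.le hC1 hCB hhLip hhBdd⟩

/-- estimates on the functionals l_{x,y}: a bound |⟨l_{x,y},h⟩| ≤
C₁ ‖h‖_Lip d(x,y), and the quantitative lower bound showing the constant function 1 is in the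
interior of the complex cone. -/
theorem lxy_estimates_and_one_interior
    {X : Type*} [Nonempty X] (d : X → X → ℝ)
    (hd_eq : ∀ x y, d x y = 0 ↔ x = y)
    (hd_symm : ∀ x y, d x y = d y x)
    (hd_tri : ∀ x y z, d x z ≤ d x y + d y z)
    (hd_le : ∀ x y, d x y ≤ 1)
    (B : ℝ) (hB : 0 < B)
    (C₁ : ℝ) (hC₁ : C₁ = max 1 (B * Real.exp B))
    (h : X → ℂ)
    (hhLip : ∃ c : ℝ, 0 ≤ c ∧ ∀ x y, ‖h x - h y‖ ≤ c * d x y)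
    (hhBdd : ∃ M : ℝ, ∀ x, ‖h x‖ ≤ M) :
    (∀ x y : X,
      ‖((Real.exp (B * d x y) : ℝ) : ℂ) * h y - h x‖ ≤
        C₁ * (supNC h + lipNC d h) * d x y) ∧
    ∀ x y x' y' : X,
      (B ^ 2 - 2 * C₁ ^ 2 * (supNC h + lipNC d h) - C₁ ^ 2 * (supNC h + lipNC d h) ^ 2) *
          (d x y * d x' y') ≤
        ((starRingEnd ℂ)
            (((Real.exp (B * d x y) : ℝ) : ℂ) * (1 + h y) - (1 + h x)) *
          (((Real.exp (B * d x' y') : ℝ) : ℂ) * (1 + h y') - (1 + h x'))).re :=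
  lxy_estimates_and_one_interior_general d hd_eq hd_symm hd_tri hd_le B hB C₁ hC₁ h hhLip hhBdd
end
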